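/- arXiv:math-ph/0202030 — 4 statements merged into one kernel-verified Lean document; each statement's English description precedes it below -/
import Mathlib

section
/- Let S be a compact convex subset of a locally convex space. A Radon probability measure μ on S has barycenter ω if and only if μ(f) ≥ f(ω) for every continuous real-valued convex function f on S. -/
open MeasureTheory
open scoped NNReal ENNReal

/-- A Radon probability measure on a compact convex set `S` has barycenter `ω` iff
`μ(f) ≥ f(ω)` for every continuous convex real-valued function `f` on `S`. -/
theorem stmt1 {E : Type*} [AddCommGroup E] [Module ℝ E] [TopologicalSpace E]
    [IsTopologicalAddGroup E] [ContinuousSMul ℝ E] [LocallyConvexSpace ℝ E] [T2Space E]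
    [MeasurableSpace E] [BorelSpace E]
    (S : Set E) (hS : IsCompact S) (hSconv : Convex ℝ S) (hne : S.Nonempty)
    (ω : E) (hω : ω ∈ S)
    (μ : ProbabilityMeasure E) (hμS : μ.toMeasure S = 1) :
    (∀ L : E →L[ℝ] ℝ, ∫ x, L x ∂μ.toMeasure = L ω) ↔
      (∀ f : E → ℝ, ContinuousOn f S → ConvexOn ℝ S f →
        f ω ≤ ∫ x in S, f x ∂μ.toMeasure) := by
  have hSclosed : IsClosed S := hS.isClosed
  have hSmeas : MeasurableSet S := hSclosed.measurableSet
  have hcompl : μ.toMeasure Sᶜ = 0 := by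
    rw [measure_compl hSmeas (measure_ne_top _ _), hμS, measure_univ, tsub_self]
  have hrestrict : μ.toMeasure.restrict S = μ.toMeasure :=
    Measure.restrict_eq_self_of_ae_mem (by
      rw [Filter.eventually_iff, mem_ae_iff]; simpa using hcompl)
  have hintL : ∀ L : E →L[ℝ] ℝ, IntegrableOn (fun x => L x) S μ.toMeasure := fun L =>
    (L.continuous.continuousOn).integrableOn_compact hS
  have hsetL : ∀ L : E →L[ℝ] ℝ, (∫ x in S, L x ∂μ.toMeasure) = ∫ x, L x ∂μ.toMeasure := by
    intro L; rw [hrestrict]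
  constructor
  · intro hbar f hfc hfconv
    by_contra hcon
    push_neg at hcon
    set c : ℝ := ∫ x in S, f x ∂μ.toMeasure with hc
    -- epigraph of f over S
    set A : Set (E × ℝ) := {p : E × ℝ | p.1 ∈ S ∧ f p.1 ≤ p.2} with hA
    have hAconv : Convex ℝ A := hfconv.convex_epigraph
    have hAclosed : IsClosed A := by
      have : A = (S ×ˢ (Set.univ : Set ℝ)) ∩ (fun p : E × ℝ => f p.1 - p.2) ⁻¹' Set.Iic 0 := by
        ext p; simp [hA, Set.mem_prod, sub_nonpos]
      rw [this]
      exact ContinuousOn.preimage_isClosed_of_isClosed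
        (ContinuousOn.sub (hfc.comp continuous_fst.continuousOn (fun p hp => hp.1))
          continuous_snd.continuousOn)
        (hSclosed.prod isClosed_univ) isClosed_Iic
    have hnotmem : (ω, c) ∉ A := fun h => absurd h.2 (not_le.mpr hcon)
    obtain ⟨Λ, u, hΛ1, hΛ2⟩ := geometric_hahn_banach_point_closed hAconv hAclosed hnotmem
    set L : E →L[ℝ] ℝ := Λ.comp (ContinuousLinearMap.inl ℝ E ℝ) with hL
    set a : ℝ := Λ (0, 1) with ha
    have hdecomp : ∀ x : E, ∀ t : ℝ, Λ (x, t) = L x + t * a := by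
      intro x t
      have : (x, t) = (x, (0 : ℝ)) + t • ((0 : E), (1 : ℝ)) := by
        simp [Prod.ext_iff]
      rw [this, map_add, _root_.map_smul]
      simp [hL, ha, smul_eq_mul]
    -- pointwise: for x ∈ S, u < L x + f x * a
    have hpt : ∀ x ∈ S, u < L x + f x * a := by
      intro x hx
      have := hΛ2 (x, f x) ⟨hx, le_refl _⟩
      rwa [hdecomp] at this
    -- integrate
    have hintf : IntegrableOn f S μ.toMeasure := hfc.integrableOn_compact hS
    have hint : IntegrableOn (fun x => L x + f x * a) S μ.toMeasure :=
      (hintL L).add (hintf.mul_const a)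
    have hSreal : μ.toMeasure.real S = 1 := by simp [Measure.real, hμS]
    have hmono : ∫ _ in S, u ∂μ.toMeasure ≤ ∫ x in S, (L x + f x * a) ∂μ.toMeasure := by
      apply setIntegral_mono_on (integrableOn_const (measure_ne_top _ _)) hint hSmeas
      intro x hx; exact (hpt x hx).le
    rw [setIntegral_const, hSreal, smul_eq_mul, one_mul] at hmono
    rw [integral_add (hintL L) (hintf.mul_const a), integral_mul_const, hsetL L, hbar L,
      ← hc] at hmono
    -- separation at (ω, c): L ω + c * a < u
    have : L ω + c * a < u := by
      have := hΛ1; rwa [hdecomp] at this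
    linarith
  · intro h L
    have h1 := h (fun x => L x) L.continuous.continuousOn
      ((L : E →ₗ[ℝ] ℝ).convexOn hSconv)
    have h2 := h (fun x => -(L x)) (L.continuous.neg.continuousOn)
      ((-(L : E →ₗ[ℝ] ℝ)).convexOn hSconv)
    rw [integral_neg] at h2
    have : (∫ x in S, L x ∂μ.toMeasure) = L ω := by
      linarith
    rw [← hsetL L] at *
    exact this
end

section
/- Let S be a metrizable compact convex subset of a locally convex space and μ a Radon probability measure on S that is maximal in the Choquet order. Then μ is supported on the closure of the set of extreme points of S; in the metrizable case, μ(ext S) = 1. -/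
open MeasureTheory Metric Set TopologicalSpace Filter
open scoped Topology NNReal ENNReal

attribute [local instance] Classical.propDecidable

set_option linter.unusedSectionVars false
set_option linter.unusedVariables false

/-- The Choquet order on probability measures on `S`: `μ ≺ ν` iff `μ(f) ≤ ν(f)` for every
continuous convex function `f` on `S`. -/
def ChoquetLE {E : Type*} [AddCommGroup E] [Module ℝ E] [TopologicalSpace E]
    [MeasurableSpace E] (S : Set E) (μ ν : ProbabilityMeasure E) : Prop :=
  ∀ f : E → ℝ, ContinuousOn f S → ConvexOn ℝ S f →
    ∫ x in S, f x ∂μ.toMeasure ≤ ∫ x in S, f x ∂ν.toMeasure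



open MeasureTheory Metric Set TopologicalSpace Filter
open scoped Topology

attribute [local instance] Classical.propDecidable

section Selection
variable {X P : Type*} [MetricSpace X] [MetricSpace P] [CompactSpace X] [CompactSpace P]
  [Nonempty P] [MeasurableSpace X] [OpensMeasurableSpace X]

/-- countable-piecewise definition is measurable -/
lemma measurable_find_piecewise [MeasurableSpace P] [BorelSpace P]
    (C : ℕ → Set X) (hC : ∀ i, MeasurableSet (C i)) (q : ℕ → P) {g : X → P}
    (hg : Measurable g) (inst : ∀ x i, Decidable (x ∈ C i)) :
    Measurable (fun x => if h : ∃ i, x ∈ C i then q (@Nat.find _ (inst x) h) else g x) := by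
  intro B hB
  have heq : (fun x => if h : ∃ i, x ∈ C i then q (@Nat.find _ (inst x) h) else g x) ⁻¹' B =
      (⋃ i ∈ {i | q i ∈ B}, (C i ∩ ⋂ j < i, (C j)ᶜ)) ∪ ((⋂ i, (C i)ᶜ) ∩ g ⁻¹' B) := by
    ext x
    by_cases h : ∃ i, x ∈ C i
    · simp only [Set.mem_preimage, h, dif_pos, Set.mem_union, Set.mem_iUnion]
      constructor
      · intro hqf
        left
        exact ⟨Nat.find h, hqf, Nat.find_spec h, by
          simp only [Set.mem_iInter, Set.mem_compl_iff]
          exact fun j hj => Nat.find_min h hj⟩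
      · rintro (⟨i, hqi, hxi, hlt⟩ | ⟨hall, _⟩)
        · have hfind : Nat.find h = i := by
            rw [Nat.find_eq_iff]
            refine ⟨hxi, fun m hm => ?_⟩
            simp only [Set.mem_iInter, Set.mem_compl_iff] at hlt
            exact hlt m hm
          rwa [hfind]
        · exact absurd h.choose_spec (by simpa using Set.mem_iInter.1 hall h.choose)
    · simp only [Set.mem_preimage, h, dif_neg, Set.mem_union, Set.mem_iUnion]
      push_neg at h
      constructor
      · intro hgx; right; exact ⟨Set.mem_iInter.2 fun i => h i, hgx⟩
      · rintro (⟨i, _, hxi, _⟩ | ⟨_, hgx⟩)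
        · exact absurd hxi (h i)
        · exact hgx
  rw [heq]
  refine MeasurableSet.union ?_ ((MeasurableSet.iInter fun i => (hC i).compl).inter (hg hB))
  exact MeasurableSet.biUnion (Set.to_countable _)
    (fun i _ => (hC i).inter (MeasurableSet.iInter fun j => MeasurableSet.iInter fun _ => (hC j).compl))

theorem exists_measurable_selection [SeparableSpace P] [MeasurableSpace P] [BorelSpace P]
    {G : Set (X × P)} (hG : IsClosed G) :
    ∃ σ : X → P, Measurable σ ∧ ∀ x, (∃ p, (x, p) ∈ G) → (x, σ x) ∈ G := by
  have hq : DenseRange (denseSeq P) := denseRange_denseSeq P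
  set q := denseSeq P with hqdef
  -- bound
  obtain ⟨R, hR⟩ : ∃ R : ℝ, ∀ p : P, dist p (q 0) < R := by
    obtain ⟨R, hR⟩ := (Metric.isBounded_of_compactSpace (s := (univ : Set P))).subset_ball (q 0)
    exact ⟨R + 1, fun p => lt_of_lt_of_le (by simpa [Metric.mem_ball] using hR (Set.mem_univ p))
      (by linarith)⟩
  have hR0 : 0 < R := lt_of_le_of_lt dist_nonneg (hR (q 0))
  set Φ : X → Set P := fun x => {p | (x, p) ∈ G} with hΦ
  have hΦclosed : ∀ x, IsClosed (Φ x) := fun x =>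
    hG.preimage (Continuous.prodMk_right x)
  have hGcomp : IsCompact G := hG.isCompact
  have hW : ∀ (c : P) (r : ℝ), MeasurableSet {x | ∃ p ∈ Φ x, dist p c < r} := by
    intro c r
    have heq : {x | ∃ p ∈ Φ x, dist p c < r} =
        ⋃ r' ∈ {r' : ℚ | 0 ≤ (r' : ℝ) ∧ (r' : ℝ) < r},
          Prod.fst '' (G ∩ (univ ×ˢ Metric.closedBall c (r' : ℝ))) := by
      ext x
      simp only [Set.mem_setOf_eq, Set.mem_iUnion, Set.mem_image]
      constructor
      · rintro ⟨p, hp, hd⟩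
        obtain ⟨r', hr1, hr2⟩ := exists_rat_btwn (show dist p c < r from hd)
        exact ⟨r', ⟨le_trans dist_nonneg hr1.le, hr2⟩, ⟨x, p⟩, ⟨hp, Set.mem_prod.2 ⟨trivial, le_of_lt hr1⟩⟩, rfl⟩
      · rintro ⟨r', ⟨_, hr2⟩, ⟨x', p⟩, ⟨hpG, hpb⟩, rfl⟩
        exact ⟨p, hpG, lt_of_le_of_lt (Set.mem_prod.1 hpb).2 hr2⟩
    rw [heq]
    refine MeasurableSet.biUnion (Set.to_countable _) (fun r' _ => ?_)
    exact ((hGcomp.inter_right (isClosed_univ.prod Metric.isClosed_closedBall)).image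
      continuous_fst).isClosed.measurableSet
  -- one construction step
  have step : ∀ (n : ℕ) (σ : X → P), Measurable σ → ∃ σ' : X → P, Measurable σ' ∧
      (∀ x, (Φ x).Nonempty → (∃ p ∈ Φ x, dist p (σ x) < R * (2:ℝ)⁻¹ ^ n) →
        ∃ p ∈ Φ x, dist p (σ' x) < R * (2:ℝ)⁻¹ ^ (n+1)) ∧
      (∀ x, dist (σ' x) (σ x) ≤ R * (2:ℝ)⁻¹ ^ n + R * (2:ℝ)⁻¹ ^ (n+1)) := by
    intro n σ hσm
    set ε := R * (2:ℝ)⁻¹ ^ (n+1) with hε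
    have hεpos : 0 < ε := by positivity
    set C : ℕ → Set X := fun i =>
      {x | ∃ p ∈ Φ x, dist p (q i) < ε} ∩ {x | dist (q i) (σ x) < R * (2:ℝ)⁻¹ ^ n + ε} with hC
    have hCm : ∀ i, MeasurableSet (C i) := fun i =>
      (hW (q i) ε).inter ((measurable_dist.comp (measurable_const.prodMk hσm)) measurableSet_Iio)
    refine ⟨fun x => if h : ∃ i, x ∈ C i then q (Nat.find h) else σ x,
      measurable_find_piecewise C hCm q hσm _, ?_, ?_⟩
    · intro x hx hprev
      have hex : ∃ i, x ∈ C i := by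
        obtain ⟨p, hp, hd⟩ := hprev
        obtain ⟨i, hi⟩ := Metric.denseRange_iff.1 hq p ε hεpos
        refine ⟨i, ⟨⟨p, hp, hi⟩, ?_⟩⟩
        calc dist (q i) (σ x) ≤ dist (q i) p + dist p (σ x) := dist_triangle _ _ _
          _ < ε + R * (2:ℝ)⁻¹ ^ n := add_lt_add (by rwa [dist_comm]) hd
          _ = R * (2:ℝ)⁻¹ ^ n + ε := by ring
      show ∃ p ∈ Φ x, dist p (if h : ∃ i, x ∈ C i then q (Nat.find h) else σ x) < _
      rw [dif_pos hex]
      obtain ⟨⟨p, hp, hd⟩, -⟩ := Nat.find_spec hex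
      exact ⟨p, hp, hd⟩
    · intro x
      show dist (if h : ∃ i, x ∈ C i then q (Nat.find h) else σ x) (σ x) ≤ _
      by_cases hex : ∃ i, x ∈ C i
      · rw [dif_pos hex]
        obtain ⟨-, hd⟩ := Nat.find_spec hex
        exact le_of_lt hd
      · rw [dif_neg hex]
        simp only [dist_self]
        positivity
  choose F hFm hFinv hFd using step
  -- the recursive sequence
  let T : ℕ → {g : X → P // Measurable g} :=
    fun n => Nat.rec ⟨fun _ => q 0, measurable_const⟩ (fun n prev => ⟨F n prev.1 prev.2, hFm _ _ _⟩) n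
  have hTsucc : ∀ n, (T (n+1)).1 = F n (T n).1 (T n).2 := fun n => rfl
  have hTinv : ∀ n x, (Φ x).Nonempty → ∃ p ∈ Φ x, dist p ((T n).1 x) < R * (2:ℝ)⁻¹ ^ n := by
    intro n
    induction n with
    | zero => exact fun x ⟨p, hp⟩ => ⟨p, hp, by show dist p (q 0) < R * (2:ℝ)⁻¹ ^ 0; simpa using hR p⟩
    | succ n ih =>
      intro x hx
      rw [hTsucc n]
      exact hFinv n (T n).1 (T n).2 x hx (ih x hx)
  have hTd : ∀ n x, dist ((T (n+1)).1 x) ((T n).1 x) ≤ (2*R) * (1/2:ℝ) ^ n := by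
    intro n x
    rw [hTsucc n]
    refine le_trans (hFd n (T n).1 (T n).2 x) ?_
    have : ((2:ℝ))⁻¹ ^ (n+1) ≤ (2:ℝ)⁻¹ ^ n := by
      apply pow_le_pow_of_le_one <;> norm_num
    have h2 : ((1:ℝ)/2) ^ n = (2:ℝ)⁻¹ ^ n := by norm_num
    rw [h2]; nlinarith [pow_pos (show (0:ℝ) < 2⁻¹ by norm_num) n]
  have hcauchy : ∀ x, CauchySeq (fun n => (T n).1 x) := by
    intro x
    exact cauchySeq_of_le_geometric (1/2) (2*R) (by norm_num) (fun n => by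
      rw [dist_comm]; exact hTd n x)
  set σ : X → P := fun x => limUnder atTop (fun n => (T n).1 x) with hσdef
  have htend : ∀ x, Tendsto (fun n => (T n).1 x) atTop (𝓝 (σ x)) := by
    intro x
    exact (hcauchy x).tendsto_limUnder
  refine ⟨σ, ?_, ?_⟩
  · exact measurable_of_tendsto_metrizable (fun n => (T n).2) (tendsto_pi_nhds.2 htend)
  · intro x hx
    have hxne : (Φ x).Nonempty := hx
    have hlim : Tendsto (fun n => dist (σ x) ((T n).1 x) + R * (2:ℝ)⁻¹ ^ n) atTop (𝓝 0) := by
      have h1 : Tendsto (fun n => dist (σ x) ((T n).1 x)) atTop (𝓝 0) :=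
        tendsto_iff_dist_tendsto_zero.1 (htend x) |>.congr (fun n => by rw [dist_comm])
      have h2 : Tendsto (fun n : ℕ => R * (2:ℝ)⁻¹ ^ n) atTop (𝓝 0) := by
        simpa using (tendsto_pow_atTop_nhds_zero_of_lt_one (by norm_num) (by norm_num : (2:ℝ)⁻¹ < 1)).const_mul R
      simpa using h1.add h2
    have hle : ∀ n, infDist (σ x) (Φ x) ≤ dist (σ x) ((T n).1 x) + R * (2:ℝ)⁻¹ ^ n := by
      intro n
      obtain ⟨p, hp, hd⟩ := hTinv n x hxne
      calc infDist (σ x) (Φ x) ≤ dist (σ x) p := infDist_le_dist_of_mem hp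
        _ ≤ dist (σ x) ((T n).1 x) + dist ((T n).1 x) p := dist_triangle _ _ _
        _ ≤ dist (σ x) ((T n).1 x) + R * (2:ℝ)⁻¹ ^ n := by
            rw [dist_comm ((T n).1 x) p]; linarith [le_of_lt hd]
    have h0 : infDist (σ x) (Φ x) ≤ 0 :=
      le_of_tendsto_of_tendsto tendsto_const_nhds hlim (Eventually.of_forall hle)
    have : infDist (σ x) (Φ x) = 0 := le_antisymm h0 infDist_nonneg
    exact ((hΦclosed x).mem_iff_infDist_zero hxne).2 this

end Selection


section Convexity


open TopologicalSpace Set Filter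
open scoped Topology

variable {E : Type*} [AddCommGroup E] [Module ℝ E] [TopologicalSpace E]
    [IsTopologicalAddGroup E] [ContinuousSMul ℝ E] [LocallyConvexSpace ℝ E] [T2Space E]

theorem exists_strictly_convex (S : Set E) (hS : IsCompact S) (hSconv : Convex ℝ S)
    (hmetr : TopologicalSpace.MetrizableSpace ↥S) :
    ∃ f : E → ℝ, ContinuousOn f S ∧ ConvexOn ℝ S f ∧
      ∀ ⦃y z : E⦄, y ∈ S → z ∈ S → y ≠ z → ∀ ⦃a b : ℝ⦄, 0 < a → 0 < b → a + b = 1 →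
        f (a • y + b • z) < a * f y + b * f z := by
  classical
  letI : MetricSpace ↥S := TopologicalSpace.metrizableSpaceMetric ↥S
  haveI : CompactSpace ↥S := isCompact_iff_compactSpace.1 hS
  -- countable separating family
  have hU : ∀ φ : E →L[ℝ] ℝ, IsOpen {p : ↥S × ↥S | φ p.1 ≠ φ p.2} := by
    intro φ
    exact isOpen_ne_fun ((φ.continuous.comp continuous_subtype_val).comp continuous_fst)
      ((φ.continuous.comp continuous_subtype_val).comp continuous_snd)
  obtain ⟨T, hTc, hTeq⟩ := TopologicalSpace.isOpen_iUnion_countable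
    (fun φ : E →L[ℝ] ℝ => {p : ↥S × ↥S | φ p.1 ≠ φ p.2}) hU
  have hTc' : (insert (0 : E →L[ℝ] ℝ) T).Countable := hTc.insert _
  obtain ⟨φ, hφ⟩ := hTc'.exists_eq_range (insert_nonempty _ _)
  have hsep : ∀ y z : E, y ∈ S → z ∈ S → y ≠ z → ∃ n, φ n y ≠ φ n z := by
    intro y z hy hz hyz
    obtain ⟨ψ, hψ⟩ := SeparatingDual.exists_separating_of_ne (R := ℝ) hyz
    have hmem : (⟨y, hy⟩, ⟨z, hz⟩) ∈ ⋃ i ∈ T, {p : ↥S × ↥S | i p.1 ≠ i p.2} := by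
      rw [hTeq]
      exact Set.mem_iUnion.2 ⟨ψ, hψ⟩
    obtain ⟨i, hiT, hi⟩ := Set.mem_iUnion₂.1 hmem
    have : i ∈ insert (0 : E →L[ℝ] ℝ) T := Set.mem_insert_of_mem _ hiT
    rw [hφ] at this
    obtain ⟨n, rfl⟩ := this
    exact ⟨n, hi⟩
  -- bounds
  have hbdd : ∀ n, ∃ C : ℝ, 0 ≤ C ∧ ∀ x ∈ S, |φ n x| ≤ C := by
    intro n
    obtain ⟨C, hC⟩ := hS.exists_bound_of_continuousOn ((φ n).continuous.continuousOn)
    exact ⟨max C 0, le_max_right _ _, fun x hx => le_trans (hC x hx) (le_max_left _ _)⟩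
  choose C hC0 hCb using hbdd
  set w : ℕ → ℝ := fun n => (1/2) ^ n / (1 + (C n) ^ 2) with hw
  have hw0 : ∀ n, 0 < w n := by
    intro n; apply div_pos (by positivity); nlinarith [hC0 n, sq_nonneg (C n)]
  set g : ℕ → E → ℝ := fun n x => w n * (φ n x) ^ 2 with hg
  have hgle : ∀ n, ∀ x ∈ S, ‖g n x‖ ≤ (1/2) ^ n := by
    intro n x hx
    have h1 : (φ n x) ^ 2 ≤ 1 + (C n) ^ 2 := by nlinarith [hCb n x hx, abs_nonneg (φ n x), sq_abs (φ n x)]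
    have h2 : 0 < 1 + (C n) ^ 2 := by nlinarith [hC0 n]
    rw [Real.norm_eq_abs, abs_of_nonneg (by positivity : (0:ℝ) ≤ g n x)]
    calc w n * (φ n x) ^ 2 ≤ w n * (1 + (C n)^2) := by
          apply mul_le_mul_of_nonneg_left h1 (hw0 n).le
      _ = (1/2)^n := by simp only [hw]; rw [div_mul_cancel₀ _ h2.ne']
  have hsum : ∀ x ∈ S, Summable (fun n => g n x) := by
    intro x hx
    have hnn : ∀ n, 0 ≤ g n x := fun n => by positivity
    refine Summable.of_nonneg_of_le hnn (fun n => ?_)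
      (summable_geometric_of_lt_one (by norm_num) (by norm_num : (1/2:ℝ) < 1))
    have h := hgle n x hx
    rwa [Real.norm_eq_abs, abs_of_nonneg (hnn n)] at h
  have sqc : ∀ (u v a b : ℝ), 0 ≤ a → 0 ≤ b → a + b = 1 → (a*u+b*v)^2 ≤ a*u^2+b*v^2 := by
    intro u v a b ha hb hab
    nlinarith [sq_nonneg (u - v), mul_nonneg ha hb, sq_nonneg (a*u+b*v)]
  have sqcs : ∀ (u v a b : ℝ), u ≠ v → 0 < a → 0 < b → a + b = 1 → (a*u+b*v)^2 < a*u^2+b*v^2 := by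
    intro u v a b huv ha hb hab
    have h1 : 0 < (u - v)^2 := sq_pos_of_ne_zero (sub_ne_zero.2 huv)
    nlinarith [mul_pos (mul_pos ha hb) h1]
  refine ⟨fun x => ∑' n, g n x, ?_, ?_, ?_⟩
  · rw [continuousOn_iff_continuous_restrict]
    have : Set.restrict S (fun x => ∑' n, g n x) = fun x : ↥S => ∑' n, g n (x : E) := rfl
    show Continuous (fun x : ↥S => ∑' n, g n (x : E))
    exact continuous_tsum (fun n => continuous_const.mul (((φ n).continuous.comp continuous_subtype_val).pow 2))
      (summable_geometric_of_lt_one (by norm_num) (by norm_num))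
      (fun n x => hgle n x x.2)
  · refine ⟨hSconv, ?_⟩
    intro x hx y hy a b ha hb hab
    have hxy : a • x + b • y ∈ S := hSconv hx hy ha hb hab
    have hterm : ∀ n, g n (a • x + b • y) ≤ a * g n x + b * g n y := by
      intro n
      have : φ n (a • x + b • y) = a * φ n x + b * φ n y := by
        simp [map_add, _root_.map_smul, smul_eq_mul]
      simp only [hg, this]
      have := mul_le_mul_of_nonneg_left (sqc (φ n x) (φ n y) a b ha hb hab) (hw0 n).le
      nlinarith [this]
    calc (∑' n, g n (a • x + b • y)) ≤ ∑' n, (a * g n x + b * g n y) := by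
          refine Summable.tsum_le_tsum hterm (hsum _ hxy) ?_
          exact ((hsum x hx).mul_left a).add ((hsum y hy).mul_left b)
      _ = a * ∑' n, g n x + b * ∑' n, g n y := by
          rw [Summable.tsum_add ((hsum x hx).mul_left a) ((hsum y hy).mul_left b),
            tsum_mul_left, tsum_mul_left]
      _ = a • (fun x => ∑' n, g n x) x + b • (fun x => ∑' n, g n x) y := by simp [smul_eq_mul]
  · intro y z hy hz hyz a b ha hb hab
    obtain ⟨n₀, hn₀⟩ := hsep y z hy hz hyz
    have hyzS : a • y + b • z ∈ S := hSconv hy hz ha.le hb.le hab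
    have hterm : ∀ n, g n (a • y + b • z) ≤ a * g n y + b * g n z := by
      intro n
      have : φ n (a • y + b • z) = a * φ n y + b * φ n z := by
        simp [map_add, _root_.map_smul, smul_eq_mul]
      simp only [hg, this]
      have := mul_le_mul_of_nonneg_left (sqc (φ n y) (φ n z) a b ha.le hb.le hab) (hw0 n).le
      nlinarith [this]
    have hstrict : g n₀ (a • y + b • z) < a * g n₀ y + b * g n₀ z := by
      have : φ n₀ (a • y + b • z) = a * φ n₀ y + b * φ n₀ z := by
        simp [map_add, _root_.map_smul, smul_eq_mul]
      simp only [hg, this]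
      have := mul_lt_mul_of_pos_left (sqcs (φ n₀ y) (φ n₀ z) a b hn₀ ha hb hab) (hw0 n₀)
      nlinarith [this]
    calc (∑' n, g n (a • y + b • z)) < ∑' n, (a * g n y + b * g n z) := by
          refine Summable.tsum_lt_tsum hterm hstrict (hsum _ hyzS) ?_
          exact ((hsum y hy).mul_left a).add ((hsum z hz).mul_left b)
      _ = a * ∑' n, g n y + b * ∑' n, g n z := by
          rw [Summable.tsum_add ((hsum y hy).mul_left a) ((hsum z hz).mul_left b),
            tsum_mul_left, tsum_mul_left]

end Convexity

section Dilation
variable {E : Type*} [AddCommGroup E] [Module ℝ E] [TopologicalSpace E]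
    [IsTopologicalAddGroup E] [ContinuousSMul ℝ E] [T2Space E]
    [MeasurableSpace E] [BorelSpace E]

theorem exists_dilation (S : Set E) (hS : IsCompact S) (hSconv : Convex ℝ S)
    (μ : ProbabilityMeasure E) (hμS : μ.toMeasure S = 1)
    (K : Set ↥S) (hK : MeasurableSet K)
    (Y Z : ↥S → ↥S) (t : ↥S → ℝ) (hY : Measurable Y) (hZ : Measurable Z) (ht : Measurable t)
    (ht0 : ∀ x, 0 ≤ t x) (ht1 : ∀ x, t x ≤ 1)
    (hbar : ∀ x ∈ K, t x • ((Y x : E)) + (1 - t x) • ((Z x : E)) = (x : E)) :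
    ∃ ν : ProbabilityMeasure E, ν.toMeasure S = 1 ∧ ChoquetLE S μ ν ∧
      ∀ h : E → ℝ, ContinuousOn h S →
        ∫ x in S, h x ∂ν.toMeasure =
          (∫ x in Kᶜ, h (x : E) ∂(μ.toMeasure.comap (Subtype.val : ↥S → E))) +
          ∫ x in K, (t x * h (Y x : E) + (1 - t x) * h (Z x : E))
            ∂(μ.toMeasure.comap (Subtype.val : ↥S → E)) := by
  have hSmeas : MeasurableSet S := hS.isClosed.measurableSet
  haveI : CompactSpace ↥S := isCompact_iff_compactSpace.1 hS
  have hemb : MeasurableEmbedding (Subtype.val : ↥S → E) := MeasurableEmbedding.subtype_coe hSmeas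
  set κ : Measure ↥S := μ.toMeasure.comap Subtype.val with hκdef
  have hκapp : ∀ A : Set ↥S, MeasurableSet A → κ A = μ.toMeasure (Subtype.val '' A) :=
    fun A _ => hemb.comap_apply _ _
  have hκuniv : κ Set.univ = 1 := by
    rw [hκapp _ MeasurableSet.univ, Set.image_univ, Subtype.range_coe, hμS]
  haveI : IsProbabilityMeasure κ := ⟨hκuniv⟩
  -- densities
  set τ₁ : ↥S → ℝ≥0 := fun x => Real.toNNReal (t x) with hτ₁
  set τ₂ : ↥S → ℝ≥0 := fun x => Real.toNNReal (1 - t x) with hτ₂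
  have hτ₁m : Measurable τ₁ := ht.real_toNNReal
  have hτ₂m : Measurable τ₂ := (measurable_const.sub ht).real_toNNReal
  have hτ₁v : ∀ x, (τ₁ x : ℝ) = t x := fun x => Real.coe_toNNReal _ (ht0 x)
  have hτ₂v : ∀ x, (τ₂ x : ℝ) = 1 - t x := fun x => Real.coe_toNNReal _ (by linarith [ht1 x])
  set ρ₁ : Measure ↥S := (κ.restrict K).withDensity (fun x => (τ₁ x : ℝ≥0∞)) with hρ₁
  set ρ₂ : Measure ↥S := (κ.restrict K).withDensity (fun x => (τ₂ x : ℝ≥0∞)) with hρ₂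
  have hρ₁fin : ρ₁ Set.univ ≤ 1 := by
    rw [hρ₁, withDensity_apply _ MeasurableSet.univ, Measure.restrict_restrict MeasurableSet.univ]
    calc ∫⁻ x in Set.univ ∩ K, (τ₁ x : ℝ≥0∞) ∂κ ≤ ∫⁻ _ in Set.univ ∩ K, 1 ∂κ := by
          refine lintegral_mono (fun x => ?_)
          simp only [ENNReal.coe_le_one_iff]
          exact Real.toNNReal_le_one.2 (ht1 x)
      _ = κ (Set.univ ∩ K) := by simp
      _ ≤ 1 := by rw [← hκuniv]; exact measure_mono (Set.subset_univ _)
  have hρ₂fin : ρ₂ Set.univ ≤ 1 := by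
    rw [hρ₂, withDensity_apply _ MeasurableSet.univ, Measure.restrict_restrict MeasurableSet.univ]
    calc ∫⁻ x in Set.univ ∩ K, (τ₂ x : ℝ≥0∞) ∂κ ≤ ∫⁻ _ in Set.univ ∩ K, 1 ∂κ := by
          refine lintegral_mono (fun x => ?_)
          simp only [ENNReal.coe_le_one_iff]
          refine Real.toNNReal_le_one.2 (by linarith [ht0 x])
      _ = κ (Set.univ ∩ K) := by simp
      _ ≤ 1 := by rw [← hκuniv]; exact measure_mono (Set.subset_univ _)
  haveI : IsFiniteMeasure ρ₁ := ⟨lt_of_le_of_lt hρ₁fin (by norm_num)⟩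
  haveI : IsFiniteMeasure ρ₂ := ⟨lt_of_le_of_lt hρ₂fin (by norm_num)⟩
  set ν' : Measure ↥S := κ.restrict Kᶜ + ρ₁.map Y + ρ₂.map Z with hν'
  haveI : IsFiniteMeasure (ρ₁.map Y) := Measure.isFiniteMeasure_map _ _
  haveI : IsFiniteMeasure (ρ₂.map Z) := Measure.isFiniteMeasure_map _ _
  -- total mass
  have hτsum : ∀ x, (τ₁ x : ℝ≥0∞) + (τ₂ x : ℝ≥0∞) = 1 := by
    intro x
    rw [← ENNReal.coe_add, ← Real.toNNReal_add (ht0 x) (by linarith [ht1 x])]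
    norm_num
  have hmass : ν' Set.univ = 1 := by
    rw [hν']
    simp only [Measure.coe_add, Pi.add_apply]
    rw [Measure.map_apply hY MeasurableSet.univ, Measure.map_apply hZ MeasurableSet.univ]
    simp only [Set.preimage_univ]
    rw [hρ₁, hρ₂, withDensity_apply _ MeasurableSet.univ, withDensity_apply _ MeasurableSet.univ]
    rw [Measure.restrict_restrict MeasurableSet.univ, Set.univ_inter]
    rw [Measure.restrict_apply MeasurableSet.univ, Set.univ_inter]
    have : ∫⁻ x in K, (τ₁ x : ℝ≥0∞) ∂κ + ∫⁻ x in K, (τ₂ x : ℝ≥0∞) ∂κ = κ K := by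
      rw [← lintegral_add_left (hτ₁m.coe_nnreal_ennreal)]
      calc ∫⁻ x in K, ((τ₁ x : ℝ≥0∞) + (τ₂ x : ℝ≥0∞)) ∂κ = ∫⁻ _ in K, 1 ∂κ := by
            congr 1; ext x; rw [hτsum x]
        _ = κ K := by simp
    rw [add_assoc, this, ← hκuniv]
    rw [add_comm]
    exact measure_add_measure_compl hK
  set νE : Measure E := ν'.map Subtype.val with hνE
  haveI : IsProbabilityMeasure νE := by
    constructor
    rw [hνE, Measure.map_apply hemb.measurable MeasurableSet.univ, Set.preimage_univ, hmass]
  have hνES : νE S = 1 := by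
    rw [hνE, Measure.map_apply hemb.measurable hSmeas]
    have : (Subtype.val : ↥S → E) ⁻¹' S = Set.univ := by
      ext x; simp [x.2]
    rw [this, hmass]
  -- integral identities
  have hcont' : ∀ {h : E → ℝ}, ContinuousOn h S → Continuous (fun x : ↥S => h (x : E)) :=
    fun hc => continuousOn_iff_continuous_restrict.1 hc
  have hintμ : ∀ (h : E → ℝ), ContinuousOn h S →
      ∫ x in S, h x ∂μ.toMeasure = ∫ x, h (x : E) ∂κ := by
    intro h hc
    have h1 : μ.toMeasure.restrict S = Measure.map Subtype.val κ := by
      rw [hκdef, hemb.map_comap, Subtype.range_coe]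
    rw [show (∫ x in S, h x ∂μ.toMeasure) = ∫ x, h x ∂(μ.toMeasure.restrict S) from rfl,
      h1, hemb.integral_map]
  -- boundedness and integrability
  have hbound : ∀ (h : E → ℝ), ContinuousOn h S → ∃ C : ℝ, ∀ x : ↥S, ‖h (x : E)‖ ≤ C := by
    intro h hc
    obtain ⟨C, hC⟩ := isCompact_univ.exists_bound_of_continuousOn (hcont' hc).continuousOn
    exact ⟨C, fun x => hC x (Set.mem_univ x)⟩
  have hinteg : ∀ (g : ↥S → ℝ) (C : ℝ), Measurable g → (∀ x, ‖g x‖ ≤ C) →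
      ∀ (m : Measure ↥S), m Set.univ ≤ 1 → Integrable g m := by
    intro g C hgm hgC m hm
    haveI : IsFiniteMeasure m := ⟨lt_of_le_of_lt hm (by norm_num)⟩
    exact Integrable.mono' (integrable_const C) hgm.aestronglyMeasurable (ae_of_all _ hgC)
  have hκle : ∀ A : Set ↥S, MeasurableSet A → (κ.restrict A) Set.univ ≤ 1 := by
    intro A hA
    rw [Measure.restrict_apply MeasurableSet.univ, Set.univ_inter, ← hκuniv]
    exact measure_mono (Set.subset_univ _)
  have hintν : ∀ (h : E → ℝ), ContinuousOn h S →
      ∫ x in S, h x ∂νE =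
        (∫ x in Kᶜ, h (x : E) ∂κ) +
        ∫ x in K, (t x * h (Y x : E) + (1 - t x) * h (Z x : E)) ∂κ := by
    intro h hc
    obtain ⟨C, hC⟩ := hbound h hc
    have hhm : Measurable (fun x : ↥S => h (x : E)) := (hcont' hc).measurable
    have h1 : νE.restrict S = Measure.map Subtype.val ν' := by
      rw [hνE, Measure.restrict_map hemb.measurable hSmeas]
      have hpre : (Subtype.val : ↥S → E) ⁻¹' S = Set.univ := by ext x; simp [x.2]
      rw [hpre, Measure.restrict_univ]
    have h2 : ∫ x in S, h x ∂νE = ∫ x, h (x : E) ∂ν' := by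
      rw [show (∫ x in S, h x ∂νE) = ∫ x, h x ∂(νE.restrict S) from rfl, h1, hemb.integral_map]
    have hint1 : Integrable (fun x : ↥S => h (x : E)) (κ.restrict Kᶜ) :=
      hinteg _ C hhm hC _ (hκle _ hK.compl)
    have hint2 : Integrable (fun x : ↥S => h (x : E)) (ρ₁.map Y) := by
      refine hinteg _ C hhm hC _ ?_
      rw [Measure.map_apply hY MeasurableSet.univ, Set.preimage_univ]
      exact hρ₁fin
    have hint3 : Integrable (fun x : ↥S => h (x : E)) (ρ₂.map Z) := by
      refine hinteg _ C hhm hC _ ?_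
      rw [Measure.map_apply hZ MeasurableSet.univ, Set.preimage_univ]
      exact hρ₂fin
    have h3 : ∫ x, h (x : E) ∂ν' =
        (∫ x in Kᶜ, h (x : E) ∂κ) + ∫ x, h (x : E) ∂(ρ₁.map Y) + ∫ x, h (x : E) ∂(ρ₂.map Z) := by
      rw [hν', integral_add_measure (hint1.add_measure hint2) hint3,
        integral_add_measure hint1 hint2]
    have h4 : ∫ x, h (x : E) ∂(ρ₁.map Y) = ∫ x in K, t x * h (Y x : E) ∂κ := by
      rw [integral_map hY.aemeasurable (hcont' hc).aestronglyMeasurable, hρ₁,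
        integral_withDensity_eq_integral_smul hτ₁m]
      refine setIntegral_congr_fun hK (fun x _ => ?_)
      rw [NNReal.smul_def, hτ₁v x, smul_eq_mul]
    have h5 : ∫ x, h (x : E) ∂(ρ₂.map Z) = ∫ x in K, (1 - t x) * h (Z x : E) ∂κ := by
      rw [integral_map hZ.aemeasurable (hcont' hc).aestronglyMeasurable, hρ₂,
        integral_withDensity_eq_integral_smul hτ₂m]
      refine setIntegral_congr_fun hK (fun x _ => ?_)
      rw [NNReal.smul_def, hτ₂v x, smul_eq_mul]
    have hint4 : Integrable (fun x : ↥S => t x * h (Y x : E)) (κ.restrict K) := by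
      refine hinteg _ C (ht.mul (hhm.comp hY)) (fun x => ?_) _ (hκle _ hK)
      show ‖t x * h (Y x : E)‖ ≤ C
      rw [norm_mul]
      calc ‖t x‖ * ‖h (Y x : E)‖ ≤ 1 * C := by
            refine mul_le_mul ?_ (hC _) (norm_nonneg _) zero_le_one
            rw [Real.norm_eq_abs, abs_of_nonneg (ht0 x)]; exact ht1 x
        _ = C := one_mul C
    have hint5 : Integrable (fun x : ↥S => (1 - t x) * h (Z x : E)) (κ.restrict K) := by
      refine hinteg _ C ((measurable_const.sub ht).mul (hhm.comp hZ)) (fun x => ?_) _ (hκle _ hK)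
      show ‖(1 - t x) * h (Z x : E)‖ ≤ C
      rw [norm_mul]
      calc ‖1 - t x‖ * ‖h (Z x : E)‖ ≤ 1 * C := by
            refine mul_le_mul ?_ (hC _) (norm_nonneg _) zero_le_one
            rw [Real.norm_eq_abs, abs_of_nonneg (by linarith [ht1 x])]
            linarith [ht0 x]
        _ = C := one_mul C
    rw [h2, h3, h4, h5, add_assoc, ← integral_add hint4 hint5]
  -- the convex-order comparison
  have hchoq : ChoquetLE S μ ⟨νE, inferInstance⟩ := by
    intro h hc hconv
    obtain ⟨C, hC⟩ := hbound h hc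
    have hhm : Measurable (fun x : ↥S => h (x : E)) := (hcont' hc).measurable
    have hint0 : Integrable (fun x : ↥S => h (x : E)) κ := hinteg _ C hhm hC _ hκuniv.le
    have hint4 : Integrable (fun x : ↥S => t x * h (Y x : E)) (κ.restrict K) := by
      refine hinteg _ C (ht.mul (hhm.comp hY)) (fun x => ?_) _ (hκle _ hK)
      show ‖t x * h (Y x : E)‖ ≤ C
      rw [norm_mul]
      calc ‖t x‖ * ‖h (Y x : E)‖ ≤ 1 * C := by
            refine mul_le_mul ?_ (hC _) (norm_nonneg _) zero_le_one
            rw [Real.norm_eq_abs, abs_of_nonneg (ht0 x)]; exact ht1 x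
        _ = C := one_mul C
    have hint5 : Integrable (fun x : ↥S => (1 - t x) * h (Z x : E)) (κ.restrict K) := by
      refine hinteg _ C ((measurable_const.sub ht).mul (hhm.comp hZ)) (fun x => ?_) _ (hκle _ hK)
      show ‖(1 - t x) * h (Z x : E)‖ ≤ C
      rw [norm_mul]
      calc ‖1 - t x‖ * ‖h (Z x : E)‖ ≤ 1 * C := by
            refine mul_le_mul ?_ (hC _) (norm_nonneg _) zero_le_one
            rw [Real.norm_eq_abs, abs_of_nonneg (by linarith [ht1 x])]
            linarith [ht0 x]
        _ = C := one_mul C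
    show ∫ x in S, h x ∂μ.toMeasure ≤ ∫ x in S, h x ∂νE
    rw [hintμ h hc, hintν h hc, ← integral_add_compl hK hint0, add_comm]
    refine add_le_add (le_refl _) ?_
    refine setIntegral_mono_on hint0.integrableOn (hint4.add hint5) hK (fun x hx => ?_)
    have hcomb := hconv.2 (Y x).2 (Z x).2 (ht0 x) (by linarith [ht1 x] : (0:ℝ) ≤ 1 - t x)
      (by ring : t x + (1 - t x) = 1)
    rw [hbar x hx] at hcomb
    simpa [smul_eq_mul] using hcomb
  exact ⟨⟨νE, inferInstance⟩, hνES, hchoq, hintν⟩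

end Dilation

/-- On a metrizable compact convex set `S`, a Choquet-maximal Radon probability measure is
supported on the closure of the extreme points; in fact `μ(ext S) = 1`. -/
theorem stmt7 {E : Type*} [AddCommGroup E] [Module ℝ E] [TopologicalSpace E]
    [IsTopologicalAddGroup E] [ContinuousSMul ℝ E] [LocallyConvexSpace ℝ E] [T2Space E]
    [MeasurableSpace E] [BorelSpace E]
    (S : Set E) (hS : IsCompact S) (hSconv : Convex ℝ S) (hne : S.Nonempty)
    (hmetr : TopologicalSpace.MetrizableSpace ↥S)
    (μ : ProbabilityMeasure E) (hμS : μ.toMeasure S = 1)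
    (hmax : ∀ ν : ProbabilityMeasure E, ν.toMeasure S = 1 →
      ChoquetLE S μ ν → ChoquetLE S ν μ) :
    μ.toMeasure (closure (Set.extremePoints ℝ S)) = 1 ∧
    μ.toMeasure (Set.extremePoints ℝ S) = 1 := by
  classical
  obtain ⟨f, hfc, hfconv, hfstrict⟩ := exists_strictly_convex S hS hSconv hmetr
  letI : MetricSpace ↥S := TopologicalSpace.metrizableSpaceMetric ↥S
  haveI : CompactSpace ↥S := isCompact_iff_compactSpace.1 hS
  haveI : Nonempty ↥S := ⟨⟨hne.choose, hne.choose_spec⟩⟩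
  have hSmeas : MeasurableSet S := hS.isClosed.measurableSet
  have hemb : MeasurableEmbedding (Subtype.val : ↥S → E) := MeasurableEmbedding.subtype_coe hSmeas
  have hfX : Continuous (fun x : ↥S => f (x : E)) := continuousOn_iff_continuous_restrict.1 hfc
  set c : ↥S × ↥S × unitInterval → E :=
    fun p => (p.2.2 : ℝ) • (p.1 : E) + (1 - (p.2.2 : ℝ)) • (p.2.1 : E) with hcdef
  have htc : Continuous (fun p : ↥S × ↥S × unitInterval => (p.2.2 : ℝ)) :=
    continuous_subtype_val.comp (continuous_snd.comp continuous_snd)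
  have hccont : Continuous c := by
    refine Continuous.add ?_ ?_
    · exact htc.smul (continuous_subtype_val.comp continuous_fst)
    · exact (continuous_const.sub htc).smul
        (continuous_subtype_val.comp (continuous_fst.comp continuous_snd))
  set v : ↥S × ↥S × unitInterval → ℝ :=
    fun p => (p.2.2 : ℝ) * f (p.1 : E) + (1 - (p.2.2 : ℝ)) * f (p.2.1 : E) with hvdef
  have hvcont : Continuous v := by
    refine Continuous.add ?_ ?_
    · exact htc.mul (hfX.comp continuous_fst)
    · exact (continuous_const.sub htc).mul (hfX.comp (continuous_fst.comp continuous_snd))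
  set G : ℝ → Set (↥S × (↥S × ↥S × unitInterval)) :=
    fun ε => {xp | c xp.2 = (xp.1 : E) ∧ f (xp.1 : E) + ε ≤ v xp.2} with hGdef
  have hGclosed : ∀ ε, IsClosed (G ε) := by
    intro ε
    refine IsClosed.inter ?_ ?_
    · exact isClosed_eq (hccont.comp continuous_snd) (continuous_subtype_val.comp continuous_fst)
    · exact isClosed_le (((hfX.comp continuous_fst)).add continuous_const) (hvcont.comp continuous_snd)
  -- main step : each bad set is null
  have main : ∀ ε : ℝ, 0 < ε →
      μ.toMeasure (Subtype.val '' (Prod.fst '' G ε)) = 0 := by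
    intro ε hε
    obtain ⟨σ, hσm, hσ⟩ := exists_measurable_selection (hGclosed ε)
    set Y : ↥S → ↥S := fun x => (σ x).1 with hYdef
    set Z : ↥S → ↥S := fun x => (σ x).2.1 with hZdef
    set t : ↥S → ℝ := fun x => ((σ x).2.2 : ℝ) with htdef
    have hY : Measurable Y := measurable_fst.comp hσm
    have hZ : Measurable Z := (measurable_fst.comp measurable_snd).comp hσm
    have ht : Measurable t :=
      measurable_subtype_coe.comp ((measurable_snd.comp measurable_snd).comp hσm)
    have ht0 : ∀ x, 0 ≤ t x := fun x => ((σ x).2.2).2.1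
    have ht1 : ∀ x, t x ≤ 1 := fun x => ((σ x).2.2).2.2
    set K : Set ↥S := Prod.fst '' G ε with hKdef
    have hKmem : ∀ x : ↥S, x ∈ K ↔ ∃ p, (x, p) ∈ G ε := by
      intro x
      constructor
      · rintro ⟨⟨x', p⟩, hxp, rfl⟩; exact ⟨p, hxp⟩
      · rintro ⟨p, hp⟩; exact ⟨(x, p), hp, rfl⟩
    have hKcomp : IsCompact K := ((hGclosed ε).isCompact).image continuous_fst
    have hK : MeasurableSet K := hKcomp.isClosed.measurableSet
    have hprop : ∀ x ∈ K, t x • ((Y x : E)) + (1 - t x) • ((Z x : E)) = (x : E) ∧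
        f (x : E) + ε ≤ t x * f (Y x : E) + (1 - t x) * f (Z x : E) := by
      intro x hx
      have := hσ x ((hKmem x).1 hx)
      exact ⟨this.1, this.2⟩
    obtain ⟨ν, hνS, hchoq, hint⟩ := exists_dilation S hS hSconv μ hμS K hK Y Z t hY hZ ht
      ht0 ht1 (fun x hx => (hprop x hx).1)
    have hle : ∫ x in S, f x ∂ν.toMeasure ≤ ∫ x in S, f x ∂μ.toMeasure :=
      hmax ν hνS hchoq f hfc hfconv
    -- compute
    set κ : Measure ↥S := μ.toMeasure.comap Subtype.val with hκdef
    have hκuniv : κ Set.univ = 1 := by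
      rw [hκdef, hemb.comap_apply, Set.image_univ, Subtype.range_coe, hμS]
    haveI : IsProbabilityMeasure κ := ⟨hκuniv⟩
    have hintμ : ∫ x in S, f x ∂μ.toMeasure = ∫ x, f (x : E) ∂κ := by
      have h1 : μ.toMeasure.restrict S = Measure.map Subtype.val κ := by
        rw [hκdef, hemb.map_comap, Subtype.range_coe]
      rw [show (∫ x in S, f x ∂μ.toMeasure) = ∫ x, f x ∂(μ.toMeasure.restrict S) from rfl,
        h1, hemb.integral_map]
    -- integrability
    obtain ⟨C, hC0, hC⟩ : ∃ C : ℝ, 0 ≤ C ∧ ∀ x : ↥S, ‖f (x : E)‖ ≤ C := by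
      obtain ⟨C, hC⟩ := isCompact_univ.exists_bound_of_continuousOn hfX.continuousOn
      exact ⟨max C 0, le_max_right _ _, fun x => le_trans (hC x (Set.mem_univ x)) (le_max_left _ _)⟩
    have hinteg : ∀ (g : ↥S → ℝ) (Cg : ℝ), Measurable g → (∀ x, ‖g x‖ ≤ Cg) →
        ∀ (m : Measure ↥S), m Set.univ ≤ 1 → Integrable g m := by
      intro g Cg hgm hgC m hm
      haveI : IsFiniteMeasure m := ⟨lt_of_le_of_lt hm (by norm_num)⟩
      exact Integrable.mono' (integrable_const Cg) hgm.aestronglyMeasurable (ae_of_all _ hgC)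
    have hκle : ∀ A : Set ↥S, (κ.restrict A) Set.univ ≤ 1 := by
      intro A
      rw [Measure.restrict_apply MeasurableSet.univ, Set.univ_inter, ← hκuniv]
      exact measure_mono (Set.subset_univ _)
    have hintf : Integrable (fun x : ↥S => f (x : E)) κ :=
      hinteg _ C hfX.measurable hC _ hκuniv.le
    have hintK : Integrable (fun x : ↥S => f (x : E) + ε) (κ.restrict K) := by
      refine hinteg _ (C + ε) (hfX.measurable.add_const ε) (fun x => ?_) _ (hκle K)
      calc ‖f (x : E) + ε‖ ≤ ‖f (x : E)‖ + ‖ε‖ := norm_add_le _ _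
        _ ≤ C + ε := by rw [Real.norm_eq_abs ε, abs_of_pos hε]; exact add_le_add (hC x) le_rfl
    have hintYZ : Integrable (fun x : ↥S => t x * f (Y x : E) + (1 - t x) * f (Z x : E))
        (κ.restrict K) := by
      refine hinteg _ (C + C) ((ht.mul (hfX.measurable.comp hY)).add
        ((measurable_const.sub ht).mul (hfX.measurable.comp hZ))) (fun x => ?_) _ (hκle K)
      have h1 : ‖t x * f (Y x : E)‖ ≤ C := by
        rw [norm_mul]
        calc ‖t x‖ * ‖f (Y x : E)‖ ≤ 1 * C := by
              refine mul_le_mul ?_ (hC _) (norm_nonneg _) zero_le_one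
              rw [Real.norm_eq_abs, abs_of_nonneg (ht0 x)]; exact ht1 x
          _ = C := one_mul C
      have h2 : ‖(1 - t x) * f (Z x : E)‖ ≤ C := by
        rw [norm_mul]
        calc ‖1 - t x‖ * ‖f (Z x : E)‖ ≤ 1 * C := by
              refine mul_le_mul ?_ (hC _) (norm_nonneg _) zero_le_one
              rw [Real.norm_eq_abs, abs_of_nonneg (by linarith [ht1 x])]
              linarith [ht0 x]
          _ = C := one_mul C
      calc ‖_ + _‖ ≤ _ := norm_add_le _ _
        _ ≤ C + C := add_le_add h1 h2
    -- gain estimate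
    have hgain : ∫ x in S, f x ∂μ.toMeasure + ε * (κ K).toReal ≤ ∫ x in S, f x ∂ν.toMeasure := by
      rw [hint f hfc, hintμ, ← integral_add_compl hK hintf, add_comm (∫ x in K, _ ∂κ) _]
      rw [add_assoc]
      refine add_le_add (le_refl _) ?_
      have h1 : ∫ x in K, f (x : E) ∂κ + ε * (κ K).toReal = ∫ x in K, (f (x : E) + ε) ∂κ := by
        rw [integral_add hintf.integrableOn (integrable_const ε)]
        congr 1
        rw [setIntegral_const, smul_eq_mul, mul_comm]
        rfl
      rw [h1]
      exact setIntegral_mono_on hintK hintYZ hK (fun x hx => (hprop x hx).2)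
    have hpos : ε * (κ K).toReal ≤ 0 := by linarith [hgain, hle]
    have hzero : (κ K).toReal = 0 := by
      have h1 : (0:ℝ) ≤ (κ K).toReal := ENNReal.toReal_nonneg
      nlinarith [hpos, hε]
    have hKfin : κ K ≠ ⊤ := by
      refine ne_of_lt (lt_of_le_of_lt ?_ (by norm_num : (1:ℝ≥0∞) < ⊤))
      rw [← hκuniv]; exact measure_mono (Set.subset_univ _)
    have hκK : κ K = 0 := by
      rcases (ENNReal.toReal_eq_zero_iff _).1 hzero with h | h
      · exact h
      · exact absurd h hKfin
    rw [← hemb.comap_apply, ← hκdef]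
    exact hκK
  -- the bad sets cover the non-extreme points
  set D : ℕ → Set E := fun n => Subtype.val '' (Prod.fst '' G (1 / ((n : ℝ) + 1))) with hDdef
  have hDnull : ∀ n, μ.toMeasure (D n) = 0 := fun n => main _ (by positivity)
  have hDmeas : ∀ n, MeasurableSet (D n) := by
    intro n
    exact ((((hGclosed _).isCompact).image continuous_fst).image
      continuous_subtype_val).isClosed.measurableSet
  have hBnull : μ.toMeasure (⋃ n, D n) = 0 := measure_iUnion_null hDnull
  have hBmeas : MeasurableSet (⋃ n, D n) := MeasurableSet.iUnion hDmeas
  have hBS : (⋃ n, D n) ⊆ S := by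
    rintro x ⟨-, ⟨n, rfl⟩, ⟨y, -, rfl⟩⟩
    exact y.2
  have hcov : S \ Set.extremePoints ℝ S ⊆ ⋃ n, D n := by
    rintro x ⟨hxS, hxne⟩
    rw [mem_extremePoints] at hxne
    push_neg at hxne
    obtain ⟨y, hy, z, hz, hseg, hne'⟩ := hxne hxS
    rw [openSegment] at hseg
    obtain ⟨a, b, ha, hb, hab, heq⟩ := hseg
    have hyz : y ≠ z := by
      rintro rfl
      have hxy : x = y := by
        rw [← heq, ← add_smul, hab, one_smul]
      exact hne' (hxy ▸ rfl) (hxy ▸ rfl)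
    have hgain : f x < a * f y + b * f z := by
      rw [← heq]
      exact hfstrict hy hz hyz ha hb hab
    obtain ⟨n, hn⟩ := exists_nat_one_div_lt (show 0 < a * f y + b * f z - f x by linarith)
    refine Set.mem_iUnion.2 ⟨n, ?_⟩
    refine ⟨⟨x, hxS⟩, ?_, rfl⟩
    refine ⟨(⟨x, hxS⟩, (⟨y, hy⟩, ⟨z, hz⟩, ⟨a, ⟨ha.le, by linarith⟩⟩)), ?_, rfl⟩
    constructor
    · show a • y + (1 - a) • z = x
      rw [show (1 : ℝ) - a = b by linarith]
      exact heq
    · show f x + 1 / ((n : ℝ) + 1) ≤ a * f y + (1 - a) * f z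
      rw [show (1 : ℝ) - a = b by linarith]
      linarith [hn]
  -- conclusion
  have hdiff : μ.toMeasure (S \ ⋃ n, D n) = 1 := by
    rw [measure_diff hBS hBmeas.nullMeasurableSet (by rw [hBnull]; exact ENNReal.zero_ne_top),
      hBnull, hμS, tsub_zero]
  have hsub : S \ ⋃ n, D n ⊆ Set.extremePoints ℝ S := by
    rintro x ⟨hxS, hxB⟩
    by_contra hxe
    exact hxB (hcov ⟨hxS, hxe⟩)
  have hext : μ.toMeasure (Set.extremePoints ℝ S) = 1 := by
    refine le_antisymm (prob_le_one) ?_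
    rw [← hdiff]
    exact measure_mono hsub
  refine ⟨?_, hext⟩
  refine le_antisymm (prob_le_one) ?_
  rw [← hext]
  exact measure_mono subset_closure
end

section
/- Let S be a compact convex subset of a locally convex space. Every Radon probability measure μ on S with barycenter ω can be weak-* approximated by a net (or, in the metrizable case, a sequence) of finitely supported probability measures on S, each with barycenter ω. -/
open MeasureTheory Set
open scoped NNReal ENNReal BoundedContinuousFunction Topology Pointwise

/-- The set of Radon probability measures on `E` supported on `S` with barycenter `ω`. -/
def measuresWithBarycenter {E : Type*} [AddCommGroup E] [Module ℝ E] [TopologicalSpace E]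
    [MeasurableSpace E] (S : Set E) (ω : E) : Set (ProbabilityMeasure E) :=
  {μ | μ.toMeasure S = 1 ∧ ∀ L : E →L[ℝ] ℝ, ∫ x, L x ∂μ.toMeasure = L ω}

/-- Finitely supported probability measures on `S` with barycenter `ω`:
finite convex combinations of Dirac measures `δ_{ρ_i}`, `ρ_i ∈ S`, with `Σ λ_i ρ_i = ω`. -/
def finitelySupportedWithBarycenter {E : Type*} [AddCommGroup E] [Module ℝ E]
    [TopologicalSpace E] [MeasurableSpace E] (S : Set E) (ω : E) :
    Set (ProbabilityMeasure E) :=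
  {ν | ∃ (n : ℕ) (w : Fin n → ℝ≥0) (ρ : Fin n → E),
    (∀ i, ρ i ∈ S) ∧ (∑ i, w i = 1) ∧
    ν.toMeasure = ∑ i, (w i : ℝ≥0∞) • Measure.dirac (ρ i) ∧
    (∑ i, (w i : ℝ) • ρ i) = ω}

section Main
set_option linter.unusedSectionVars false
variable {E : Type*} [AddCommGroup E] [Module ℝ E] [TopologicalSpace E]
    [IsTopologicalAddGroup E] [ContinuousSMul ℝ E] [LocallyConvexSpace ℝ E] [T2Space E]
    [MeasurableSpace E] [BorelSpace E]

lemma integrable_of_compact_carrier {K : Set E} (hK : IsCompact K) {L : E → ℝ}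
    (hL : Continuous L) (m : Measure E) [IsFiniteMeasure m] (hm : m Kᶜ = 0) :
    Integrable L m := by
  obtain ⟨C, hC⟩ := hK.exists_bound_of_continuousOn hL.continuousOn
  have hae : ∀ᵐ x ∂m, x ∈ K := by
    rw [MeasureTheory.ae_iff]
    exact hm
  refine ⟨hL.aestronglyMeasurable, HasFiniteIntegral.of_bounded (C := C) ?_⟩
  filter_upwards [hae] with x hx using hC x hx

lemma exists_barycenter {K : Set E} (hK : IsCompact K) (hKc : Convex ℝ K)
    (m : Measure E) [IsProbabilityMeasure m] (hm : m Kᶜ = 0) :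
    ∃ ρ ∈ K, ∀ L : E →L[ℝ] ℝ, ∫ x, L x ∂m = L ρ := by
  classical
  have hae : ∀ᵐ x ∂m, x ∈ K := by rw [MeasureTheory.ae_iff]; exact hm
  by_contra hcon
  push_neg at hcon
  have hempty : (K ∩ ⋂ L : E →L[ℝ] ℝ, {x | L x = ∫ y, L y ∂m}) = ∅ := by
    rw [Set.eq_empty_iff_forall_notMem]
    rintro ρ ⟨hρK, hρ⟩
    simp only [Set.mem_iInter, Set.mem_setOf_eq] at hρ
    obtain ⟨L, hL⟩ := hcon ρ hρK
    exact hL (hρ L).symm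
  obtain ⟨u, hu⟩ := hK.elim_finite_subfamily_closed
    (fun L : E →L[ℝ] ℝ => {x | L x = ∫ y, L y ∂m})
    (fun L => isClosed_eq L.continuous continuous_const) hempty
  set T : E →L[ℝ] (↥u → ℝ) := ContinuousLinearMap.pi (fun L : ↥u => (L : E →L[ℝ] ℝ)) with hT
  set c : ↥u → ℝ := fun L => ∫ y, (L : E →L[ℝ] ℝ) y ∂m with hc
  have hTK_compact : IsCompact (T '' K) := hK.image T.continuous
  have hTK_convex : Convex ℝ (T '' K) := hKc.linear_image T.toLinearMap
  have hint : ∀ L : E →L[ℝ] ℝ, Integrable (fun x => L x) m :=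
    fun L => integrable_of_compact_carrier hK L.continuous m hm
  have hcmem : c ∉ T '' K := by
    rintro ⟨ρ, hρK, hρ⟩
    have : ρ ∈ K ∩ ⋂ L ∈ u, {x | L x = ∫ y, L y ∂m} := by
      refine ⟨hρK, ?_⟩
      simp only [Set.mem_iInter, Set.mem_setOf_eq]
      intro L hL
      have := congrFun hρ ⟨L, hL⟩
      simpa [T, c] using this
    rw [hu] at this
    exact this
  obtain ⟨g, s, hgs, hsc⟩ := geometric_hahn_banach_closed_point hTK_convex
    hTK_compact.isClosed hcmem
  have hg_expand : ∀ v : ↥u → ℝ, g v = ∑ i : ↥u, v i * g (fun j => if i = j then 1 else 0) := by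
    intro v
    conv_lhs => rw [pi_eq_sum_univ v]
    rw [map_sum]
    congr 1
    ext i
    exact g.map_smul _ _
  have hgc : g c = ∫ x, g (T x) ∂m := by
    have : (fun x => g (T x)) = fun x =>
        ∑ i : ↥u, (i : E →L[ℝ] ℝ) x * g (fun j => if i = j then 1 else 0) := by
      ext x
      rw [hg_expand (T x)]
      rfl
    rw [this, integral_finset_sum]
    · rw [hg_expand c]
      congr 1
      ext i
      rw [← integral_mul_const]
    · intro i _
      exact (hint i).mul_const _
  have hle : ∫ x, g (T x) ∂m ≤ s := by
    have hb : ∀ᵐ x ∂m, g (T x) ≤ s := by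
      filter_upwards [hae] with x hx
      exact le_of_lt (hgs _ ⟨x, hx, rfl⟩)
    calc ∫ x, g (T x) ∂m ≤ ∫ _, s ∂m := by
          refine integral_mono_ae ?_ (integrable_const s) hb
          exact (hint (g.comp T))
      _ = s := by simp
  rw [← hgc] at hle
  exact absurd hsc (not_lt.mpr hle)

lemma eq_of_forall_clm_eq {x y : E} (h : ∀ L : E →L[ℝ] ℝ, L x = L y) : x = y := by
  by_contra hne
  obtain ⟨L, hL⟩ := SeparatingDual.exists_separating_of_ne (R := ℝ) hne
  exact hL (h L)

lemma closure_subset_of_add_self {V W : Set E} (hV : V ∈ 𝓝 (0 : E))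
    (h : ∀ v ∈ V, ∀ w ∈ V, v + w ∈ W) : closure V ⊆ W := by
  intro z hz
  have hnegV : -V ∈ 𝓝 (0 : E) := neg_mem_nhds_zero E hV
  have hN : z +ᵥ (-V) ∈ 𝓝 z := by
    have := map_add_left_nhds_zero z
    rw [← this]
    exact Filter.image_mem_map hnegV
  obtain ⟨y, hy, hyV⟩ := mem_closure_iff_nhds.mp hz _ hN
  obtain ⟨v, hv, hvy⟩ := hy
  have hvV : -v ∈ V := by simpa using hv
  have hzv : z + v = y := by simpa [vadd_eq_add] using hvy
  have : y + (-v) = z := by rw [← hzv]; abel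
  rw [← this]
  exact h y hyV (-v) hvV

lemma exists_approx (S : Set E) (hS : IsCompact S) (hSconv : Convex ℝ S)
    (ω : E) (hω : ω ∈ S) (μ : ProbabilityMeasure E) (hμ : μ ∈ measuresWithBarycenter S ω)
    (F : Finset (E →ᵇ ℝ)) {ε : ℝ} (hε : 0 < ε) :
    ∃ ν ∈ finitelySupportedWithBarycenter S ω,
      ∀ f ∈ F, |∫ x, f x ∂ν.toMeasure - ∫ x, f x ∂μ.toMeasure| ≤ ε := by
  classical
  obtain ⟨hμS, hbar⟩ := hμ
  set m0 : Measure E := μ.toMeasure with hm0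
  have hSmeas : MeasurableSet S := hS.isClosed.measurableSet
  have hScompl : m0 Sᶜ = 0 := by
    have h1 := measure_compl hSmeas (measure_ne_top m0 S)
    rw [hμS, measure_univ] at h1
    simpa using h1
  have hhalf : 0 < ε / 2 := by linarith
  -- choice of convex neighborhoods
  have hchoice : ∀ x : E, ∃ V : Set E, IsOpen V ∧ (0 : E) ∈ V ∧ Convex ℝ V ∧
      ∃ W : Set E, (∀ v ∈ V, ∀ w ∈ V, v + w ∈ W) ∧
        (∀ y ∈ W, ∀ f ∈ F, |f (x + y) - f x| < ε / 2) := by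
    intro x
    have hG : {y : E | ∀ f ∈ F, |f y - f x| < ε / 2} ∈ 𝓝 x := by
      have hmem : (⋂ f ∈ F, {y : E | |f y - f x| < ε / 2}) ∈ 𝓝 x := by
        refine (Filter.biInter_finset_mem F).mpr (fun f _ => ?_)
        have hcont : Continuous fun y : E => |f y - f x| :=
          (f.continuous.sub continuous_const).abs
        have h0 : |f x - f x| < ε / 2 := by simpa using hhalf
        have := hcont.continuousAt (x := x) |>.preimage_mem_nhds (Iio_mem_nhds h0)
        exact this
      refine Filter.mem_of_superset hmem ?_
      intro y hy
      simp only [Set.mem_iInter] at hy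
      exact fun f hf => hy f hf
    have hW1 : {v : E | ∀ f ∈ F, |f (x + v) - f x| < ε / 2} ∈ 𝓝 (0 : E) := by
      have hcont : ContinuousAt (fun v : E => x + v) 0 :=
        (continuous_const.add continuous_id).continuousAt
      have h00 : {y : E | ∀ f ∈ F, |f y - f x| < ε / 2} ∈ 𝓝 ((fun v : E => x + v) 0) := by
        simpa using hG
      exact hcont.preimage_mem_nhds h00
    obtain ⟨W, ⟨hWmem, hWconv⟩, hWsub⟩ :=
      (LocallyConvexSpace.convex_basis_zero ℝ E).mem_iff.mp hW1
    obtain ⟨V', hV'mem, hV'⟩ := exists_nhds_zero_half hWmem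
    obtain ⟨V'', ⟨hV''mem, hV''conv⟩, hV''sub⟩ :=
      (LocallyConvexSpace.convex_basis_zero ℝ E).mem_iff.mp hV'mem
    refine ⟨interior V'', isOpen_interior, mem_interior_iff_mem_nhds.mpr hV''mem,
      hV''conv.interior, W, ?_, ?_⟩
    · intro v hv w hw
      exact hV' v (hV''sub (interior_subset hv)) w (hV''sub (interior_subset hw))
    · intro y hy f hf
      exact hWsub hy f hf
  choose V hVopen hV0 hVconv W hVW hosc using hchoice
  -- compactness: finite subcover
  obtain ⟨t, ht, hcover⟩ := hS.elim_nhds_subcover (fun x => x +ᵥ V x)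
    (fun x _ => ((hVopen x).vadd x).mem_nhds ⟨0, hV0 x, add_zero x⟩)
  set M := t.card with hM
  set e : Fin M → E := fun j => ((t.equivFin.symm j : ↥t) : E) with he
  have heS : ∀ j, e j ∈ S := fun j => ht _ (t.equivFin.symm j).2
  set Un : ℕ → Set E := fun n =>
    if h : n < M then S ∩ (e ⟨n, h⟩ +ᵥ V (e ⟨n, h⟩)) else ∅ with hUn
  set A : ℕ → Set E := disjointed Un with hA
  have hUn_meas : ∀ n, MeasurableSet (Un n) := by
    intro n
    by_cases h : n < M
    · simp only [hUn, dif_pos h]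
      exact hSmeas.inter ((hVopen _).vadd _).measurableSet
    · simp only [hUn, dif_neg h]
      exact MeasurableSet.empty
  have hA_meas : ∀ n, MeasurableSet (A n) := MeasurableSet.disjointed hUn_meas
  have hA_disj : Pairwise (Function.onFun Disjoint A) := disjoint_disjointed Un
  have hA_sub : ∀ n, A n ⊆ Un n := disjointed_subset Un
  have hUn_sub : ∀ n, Un n ⊆ S := by
    intro n
    by_cases h : n < M
    · simp only [hUn, dif_pos h]
      exact Set.inter_subset_left
    · simp only [hUn, dif_neg h]
      exact Set.empty_subset _
  have hUn_union : (⋃ n, Un n) = S := by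
    apply Set.Subset.antisymm
    · exact Set.iUnion_subset hUn_sub
    · intro x hx
      have := hcover hx
      simp only [Set.mem_iUnion] at this
      obtain ⟨y, hyt, hxy⟩ := this
      refine Set.mem_iUnion.mpr ⟨(t.equivFin ⟨y, hyt⟩ : Fin M), ?_⟩
      simp only [hUn, dif_pos (t.equivFin ⟨y, hyt⟩).2]
      have hey : e ⟨(t.equivFin ⟨y, hyt⟩ : Fin M), (t.equivFin ⟨y, hyt⟩).2⟩ = y := by
        simp only [he, Fin.eta, Equiv.symm_apply_apply]
      rw [dif_pos (t.equivFin ⟨y, hyt⟩).2, hey]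
      exact ⟨hx, hxy⟩
  have hA_union : (⋃ n, A n) = S := by rw [hA, iUnion_disjointed, hUn_union]
  have hA_empty : ∀ n, M ≤ n → A n = ∅ := by
    intro n hn
    have h2 := hA_sub n
    simp only [hUn, dif_neg (not_lt.mpr hn)] at h2
    exact Set.eq_empty_iff_forall_notMem.mpr (fun x hx => h2 hx)
  have hAS : ∀ n, A n ⊆ S := fun n => (hA_sub n).trans (hUn_sub n)
  -- the union over Fin M
  have hA_union' : (⋃ j : Fin M, A j) = S := by
    rw [← hA_union]
    apply Set.Subset.antisymm
    · exact Set.iUnion_subset (fun j => Set.subset_iUnion A (j : ℕ))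
    · intro x hx
      obtain ⟨n, hn⟩ := Set.mem_iUnion.mp hx
      by_cases h : n < M
      · exact Set.mem_iUnion.mpr ⟨⟨n, h⟩, hn⟩
      · rw [hA_empty n (not_lt.mp h)] at hn
        exact absurd hn (Set.notMem_empty x)
  have hA_disj' : Pairwise (Function.onFun Disjoint fun j : Fin M => A j) :=
    fun i j hij => hA_disj (fun h => hij (Fin.val_injective h))
  -- weights
  set w : Fin M → ℝ≥0 := fun j => (m0 (A j)).toNNReal with hw
  have hwcoe : ∀ j, (w j : ℝ≥0∞) = m0 (A j) :=
    fun j => ENNReal.coe_toNNReal (measure_ne_top m0 _)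
  have hsum1 : ∑ j : Fin M, (w j : ℝ≥0∞) = 1 := by
    have h1 : m0 (⋃ j : Fin M, A j) = ∑' j : Fin M, m0 (A j) :=
      measure_iUnion hA_disj' (fun j => hA_meas j)
    rw [hA_union'] at h1
    rw [tsum_fintype] at h1
    rw [hμS] at h1  -- m0 S = 1
    simp only [hwcoe]
    exact h1.symm
  have hw_sum : ∑ j, w j = 1 := by
    have : ((∑ j, w j : ℝ≥0) : ℝ≥0∞) = ((1 : ℝ≥0) : ℝ≥0∞) := by
      push_cast
      simpa using hsum1
    exact_mod_cast this
  -- conditional measures and barycenters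
  have hKS : ∀ j : Fin M, closure (convexHull ℝ (A j)) ⊆ S := by
    intro j
    calc closure (convexHull ℝ (A j)) ⊆ closure (convexHull ℝ S) :=
          closure_mono (convexHull_mono (hAS j))
      _ = closure S := by rw [hSconv.convexHull_eq]
      _ = S := hS.isClosed.closure_eq
  have hbary : ∀ j : Fin M, m0 (A j) ≠ 0 →
      ∃ ρ, ρ ∈ closure (convexHull ℝ (A (j : ℕ))) ∧
        ∀ L : E →L[ℝ] ℝ, ∫ x, L x ∂((m0 (A j))⁻¹ • m0.restrict (A j)) = L ρ := by
    intro j hj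
    set mj : Measure E := (m0 (A j))⁻¹ • m0.restrict (A j) with hmj
    haveI : IsProbabilityMeasure mj := by
      constructor
      rw [hmj, Measure.smul_apply, Measure.restrict_apply_univ, smul_eq_mul]
      exact ENNReal.inv_mul_cancel hj (measure_ne_top m0 _)
    have hK_compact : IsCompact (closure (convexHull ℝ (A j))) :=
      hS.of_isClosed_subset isClosed_closure (hKS j)
    have hK_convex : Convex ℝ (closure (convexHull ℝ (A (j : ℕ)))) :=
      (convex_convexHull ℝ _).closure
    have hmjc : mj (closure (convexHull ℝ (A (j : ℕ))))ᶜ = 0 := by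
      rw [hmj, Measure.smul_apply, Measure.restrict_apply
        (hK_compact.isClosed.measurableSet.compl)]
      have : (closure (convexHull ℝ (A (j : ℕ))))ᶜ ∩ A j = ∅ := by
        rw [Set.eq_empty_iff_forall_notMem]
        rintro x ⟨hxc, hxA⟩
        exact hxc (subset_closure (subset_convexHull ℝ _ hxA))
      rw [this]
      simp
    obtain ⟨ρ, hρ1, hρ2⟩ := exists_barycenter hK_compact hK_convex mj hmjc
    exact ⟨ρ, hρ1, hρ2⟩
  set ρ : Fin M → E := fun j =>
    if h : m0 (A j) ≠ 0 then (hbary j h).choose else ω with hρdef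
  have hρS : ∀ j, ρ j ∈ S := by
    intro j
    by_cases h : m0 (A j) ≠ 0
    · simp only [hρdef, dif_pos h]
      exact hKS j (hbary j h).choose_spec.1
    · simp only [hρdef, dif_neg h]
      exact hω
  have hρbar : ∀ (j : Fin M) (h : m0 (A j) ≠ 0),
      (ρ j ∈ closure (convexHull ℝ (A (j : ℕ)))) ∧
      ∀ L : E →L[ℝ] ℝ, ∫ x, L x ∂((m0 (A j))⁻¹ • m0.restrict (A j)) = L (ρ j) := by
    intro j h
    simp only [hρdef, dif_pos h]
    exact (hbary j h).choose_spec
  -- splitting integrals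
  have hsplit : ∀ g : E → ℝ, Continuous g →
      ∫ x, g x ∂m0 = ∑ j : Fin M, ∫ x in A (j : ℕ), g x ∂m0 := by
    intro g hg
    have hint : Integrable g m0 := integrable_of_compact_carrier hS hg m0 hScompl
    have hresS : m0.restrict S = m0 := by
      apply Measure.restrict_eq_self_of_ae_mem
      rw [MeasureTheory.ae_iff]
      exact hScompl
    calc ∫ x, g x ∂m0 = ∫ x in S, g x ∂m0 := by rw [hresS]
      _ = ∫ x in ⋃ j : Fin M, A (j : ℕ), g x ∂m0 := by rw [hA_union']
      _ = ∑ j : Fin M, ∫ x in A (j : ℕ), g x ∂m0 :=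
          integral_iUnion_fintype (fun j => hA_meas j) hA_disj'
            (fun j => hint.integrableOn)
  have hpiece : ∀ j : Fin M, m0 (A j) ≠ 0 → ∀ g : E → ℝ,
      ∫ x in A (j : ℕ), g x ∂m0
        = (w j : ℝ) * ∫ x, g x ∂((m0 (A j))⁻¹ • m0.restrict (A j)) := by
    intro j hj g
    rw [integral_smul_measure]
    have htoReal : ((m0 (A (j : ℕ)))⁻¹).toReal = ((m0 (A (j : ℕ))).toReal)⁻¹ :=
      ENNReal.toReal_inv _
    have hwj : (w j : ℝ) = (m0 (A (j : ℕ))).toReal := rfl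
    rw [htoReal, hwj, smul_eq_mul, ← mul_assoc,
      mul_inv_cancel₀ (ENNReal.toReal_ne_zero.mpr ⟨hj, measure_ne_top m0 _⟩), one_mul]
  have hwzero : ∀ j : Fin M, m0 (A j) = 0 → w j = 0 := by
    intro j hj
    rw [hw]
    simp [hj]
  have hLpiece : ∀ (L : E →L[ℝ] ℝ) (j : Fin M),
      ∫ x in A (j : ℕ), L x ∂m0 = (w j : ℝ) * L (ρ j) := by
    intro L j
    by_cases hj : m0 (A j) = 0
    · rw [Measure.restrict_eq_zero.mpr hj, integral_zero_measure, hwzero j hj]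
      simp
    · rw [hpiece j hj, (hρbar j hj).2 L]
  -- the barycenter identity
  have hbary_sum : ∑ j : Fin M, (w j : ℝ) • ρ j = ω := by
    apply eq_of_forall_clm_eq
    intro L
    rw [map_sum]
    have : ∀ j : Fin M, L ((w j : ℝ) • ρ j) = ∫ x in A (j : ℕ), L x ∂m0 := by
      intro j
      rw [L.map_smul, smul_eq_mul, hLpiece L j]
    rw [Finset.sum_congr rfl (fun j _ => this j)]
    rw [← hsplit (fun x => L x) L.continuous, hbar L]
  -- the finitely supported measure
  set κ : Measure E := ∑ j : Fin M, (w j : ℝ≥0∞) • Measure.dirac (ρ j) with hκ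
  haveI hκprob : IsProbabilityMeasure κ := by
    constructor
    rw [hκ]
    rw [Measure.finset_sum_apply]
    simp only [Measure.smul_apply, Measure.dirac_apply_of_mem (Set.mem_univ _),
      smul_eq_mul, mul_one]
    exact hsum1
  set ν : ProbabilityMeasure E := ⟨κ, hκprob⟩ with hν
  have hνmem : ν ∈ finitelySupportedWithBarycenter S ω :=
    ⟨M, w, ρ, hρS, hw_sum, rfl, hbary_sum⟩
  refine ⟨ν, hνmem, ?_⟩
  -- the integral estimates
  intro f hf
  have hνint : ∫ x, f x ∂ν.toMeasure = ∑ j : Fin M, (w j : ℝ) * f (ρ j) := by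
    have : ν.toMeasure = κ := rfl
    rw [this, hκ]
    rw [integral_finset_sum_measure (fun j _ =>
      (f.integrable _).smul_measure ENNReal.coe_ne_top)]
    congr 1
    ext j
    rw [integral_smul_measure, integral_dirac, ENNReal.coe_toReal, smul_eq_mul]
  have hμint : ∫ x, f x ∂μ.toMeasure = ∑ j : Fin M, ∫ x in A (j : ℕ), f x ∂m0 :=
    hsplit (fun x => f x) f.continuous
  rw [hνint, hμint, ← Finset.sum_sub_distrib]
  have hest : ∀ j : Fin M,
      |(w j : ℝ) * f (ρ j) - ∫ x in A (j : ℕ), f x ∂m0| ≤ ε * (w j : ℝ) := by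
    intro j
    by_cases hj : m0 (A j) = 0
    · rw [Measure.restrict_eq_zero.mpr hj, integral_zero_measure, hwzero j hj]
      simp
    · set mj : Measure E := (m0 (A j))⁻¹ • m0.restrict (A j) with hmj
      haveI : IsProbabilityMeasure mj := by
        constructor
        rw [hmj, Measure.smul_apply, Measure.restrict_apply_univ, smul_eq_mul]
        exact ENNReal.inv_mul_cancel hj (measure_ne_top m0 _)
      rw [hpiece j hj f, ← mul_sub, abs_mul, abs_of_nonneg (NNReal.coe_nonneg _),
        mul_comm (ε) _]
      apply mul_le_mul_of_nonneg_left _ (NNReal.coe_nonneg _)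
      -- the center of the piece
      have hjM : (j : ℕ) < M := j.2
      set xc : E := e ⟨(j : ℕ), hjM⟩ with hxc
      have hUnj : Un (j : ℕ) = S ∩ (xc +ᵥ V xc) := by
        simp only [hUn, hxc, dif_pos hjM]
      have hAsub : A (j : ℕ) ⊆ xc +ᵥ V xc := by
        intro x hx
        have := hA_sub (j : ℕ) hx
        rw [hUnj] at this
        exact this.2
      -- ρ j lies in xc +ᵥ W xc
      have hVnhds : V xc ∈ 𝓝 (0 : E) := (hVopen xc).mem_nhds (hV0 xc)
      have hclosureV : closure (V xc) ⊆ W xc :=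
        closure_subset_of_add_self hVnhds (hVW xc)
      have hρmem : ρ j ∈ xc +ᵥ W xc := by
        have h1 : ρ j ∈ closure (convexHull ℝ (A (j : ℕ))) := (hρbar j hj).1
        have h2 : convexHull ℝ (A (j : ℕ)) ⊆ xc +ᵥ V xc :=
          convexHull_min hAsub ((hVconv xc).vadd xc)
        have h3 : closure (convexHull ℝ (A (j : ℕ))) ⊆ xc +ᵥ closure (V xc) := by
          rw [← closure_vadd]
          exact closure_mono h2
        obtain ⟨v, hv, hvx⟩ := h3 h1
        exact ⟨v, hclosureV hv, hvx⟩
      have hfρ : |f (ρ j) - f xc| < ε / 2 := by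
        obtain ⟨y, hy, hyx⟩ := hρmem
        rw [← hyx]
        exact hosc xc y hy f hf
      -- a.e. bound on mj
      have hmjA : mj (A (j : ℕ))ᶜ = 0 := by
        rw [hmj, Measure.smul_apply, Measure.restrict_apply (hA_meas _).compl]
        simp
      have haemem : ∀ᵐ x ∂mj, x ∈ A (j : ℕ) := by
        rw [MeasureTheory.ae_iff]
        exact hmjA
      have haebound : ∀ᵐ x ∂mj, |f x - f xc| < ε / 2 := by
        filter_upwards [haemem] with x hx
        obtain ⟨v, hv, hvx⟩ := hAsub hx
        have hvW : v ∈ W xc := by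
          have := hVW xc v hv 0 (hV0 xc)
          simpa using this
        rw [← hvx]
        exact hosc xc v hvW f hf
      have hintest : |∫ x, f x ∂mj - f xc| ≤ ε / 2 := by
        have hsub : ∫ x, f x ∂mj - f xc = ∫ x, (f x - f xc) ∂mj := by
          rw [integral_sub (f.integrable mj) (integrable_const _), integral_const]
          simp
        rw [hsub]
        have := norm_integral_le_of_norm_le_const (μ := mj)
          (f := fun x => f x - f xc) (C := ε / 2)
          (by filter_upwards [haebound] with x hx using le_of_lt (by simpa using hx))
        simpa using this
      calc |f (ρ j) - ∫ x, f x ∂mj|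
          ≤ |f (ρ j) - f xc| + |f xc - ∫ x, f x ∂mj| := abs_sub_le _ _ _
        _ ≤ ε / 2 + ε / 2 := by
            refine add_le_add (le_of_lt hfρ) ?_
            rw [abs_sub_comm]
            exact hintest
        _ = ε := by ring
  calc |∑ j : Fin M, ((w j : ℝ) * f (ρ j) - ∫ x in A (j : ℕ), f x ∂m0)|
      ≤ ∑ j : Fin M, |(w j : ℝ) * f (ρ j) - ∫ x in A (j : ℕ), f x ∂m0| :=
        Finset.abs_sum_le_sum_abs _ _
    _ ≤ ∑ j : Fin M, ε * (w j : ℝ) := Finset.sum_le_sum (fun j _ => hest j)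
    _ = ε * ∑ j : Fin M, (w j : ℝ) := by rw [Finset.mul_sum]
    _ = ε := by
        have h1 : (∑ j : Fin M, (w j : ℝ)) = ((∑ j, w j : ℝ≥0) : ℝ) := by push_cast; ring
        rw [h1, hw_sum, NNReal.coe_one, mul_one]

end Main

/-- Every Radon probability measure on a compact convex `S` with barycenter `ω` is a weak-*
limit (of a net, i.e. lies in the closure) of finitely supported probability measures on `S`
with barycenter `ω`. -/
theorem stmt8 {E : Type*} [AddCommGroup E] [Module ℝ E] [TopologicalSpace E]
    [IsTopologicalAddGroup E] [ContinuousSMul ℝ E] [LocallyConvexSpace ℝ E] [T2Space E]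
    [MeasurableSpace E] [BorelSpace E]
    (S : Set E) (hS : IsCompact S) (hSconv : Convex ℝ S)
    (ω : E) (hω : ω ∈ S)
    (μ : ProbabilityMeasure E) (hμ : μ ∈ measuresWithBarycenter S ω) :
    μ ∈ closure (finitelySupportedWithBarycenter S ω) := by
  classical
  have hkey : ∀ i : Finset (E →ᵇ ℝ) × ℕ, ∃ ν,
      ν ∈ finitelySupportedWithBarycenter S ω ∧
      ∀ f ∈ i.1, |∫ x, f x ∂ν.toMeasure - ∫ x, f x ∂μ.toMeasure| ≤ ((i.2 : ℝ) + 1)⁻¹ := by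
    intro i
    obtain ⟨ν, hν1, hν2⟩ := exists_approx S hS hSconv ω hω μ hμ i.1
      (ε := ((i.2 : ℝ) + 1)⁻¹) (by positivity)
    exact ⟨ν, hν1, hν2⟩
  choose ν hν hνapprox using hkey
  have htendsto : Filter.Tendsto ν Filter.atTop (𝓝 μ) := by
    rw [ProbabilityMeasure.tendsto_iff_forall_integral_tendsto]
    intro f
    rw [Metric.tendsto_atTop]
    intro δ hδ
    obtain ⟨N, hN⟩ := exists_nat_gt δ⁻¹
    refine ⟨({f}, N), ?_⟩
    intro i hi
    have hf : f ∈ i.1 := hi.1 (Finset.mem_singleton_self f)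
    have hb := hνapprox i f hf
    have hlt : ((i.2 : ℝ) + 1)⁻¹ < δ := by
      have h1 : δ⁻¹ < (i.2 : ℝ) + 1 := by
        calc δ⁻¹ < (N : ℝ) := hN
          _ ≤ (i.2 : ℝ) := by exact_mod_cast hi.2
          _ ≤ (i.2 : ℝ) + 1 := by linarith
      calc ((i.2 : ℝ) + 1)⁻¹ < (δ⁻¹)⁻¹ := by
            apply inv_strictAnti₀ (by positivity) h1
        _ = δ := inv_inv δ
    rw [Real.dist_eq]
    exact lt_of_le_of_lt hb hlt
  exact mem_closure_of_tendsto htendsto (Filter.Eventually.of_forall hν)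
end

section
/- Let H₁, H₂ be finite-dimensional Hilbert spaces and E the entanglement of formation on density matrices of H₁ ⊗ H₂. Then E is subadditive with respect to tensoring: E(ϱ ⊗ ϱ) ≤ 2 E(ϱ), where ϱ ⊗ ϱ is viewed as a state on (H₁ ⊗ H₁) ⊗ (H₂ ⊗ H₂) with the bipartition separating the two H₁ factors from the two H₂ factors. -/
open Matrix
open scoped ComplexOrder Kronecker Pointwise

/-- Partial trace over the second tensor factor. -/
noncomputable def ptrace2 {n₁ n₂ : Type*} [Fintype n₂]
    (ϱ : Matrix (n₁ × n₂) (n₁ × n₂) ℂ) : Matrix n₁ n₁ ℂ :=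
  Matrix.of fun i j => ∑ k : n₂, ϱ (i, k) (j, k)

/-- Von Neumann entropy via eigenvalues (with `0 log 0 = 0`). -/
noncomputable def vnEntropy {n : Type*} [Fintype n] [DecidableEq n]
    (A : Matrix n n ℂ) : ℝ :=
  if h : A.IsHermitian then ∑ i, Real.negMulLog (h.eigenvalues i) else 0

/-- Entanglement of formation: the infimum of `Σ λ_i S(Tr₂ |ψ_i⟩⟨ψ_i|)` over all finite
convex decompositions `ϱ = Σ λ_i |ψ_i⟩⟨ψ_i|` into pure states. -/
noncomputable def EoF {n₁ n₂ : Type*} [Fintype n₁] [Fintype n₂] [DecidableEq n₁]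
    (ϱ : Matrix (n₁ × n₂) (n₁ × n₂) ℂ) : ℝ :=
  sInf {t : ℝ | ∃ (m : ℕ) (l : Fin m → ℝ) (ψ : Fin m → (n₁ × n₂ → ℂ)),
    (∀ i, 0 ≤ l i) ∧ (∑ i, l i = 1) ∧ (∀ i, ∑ k, ‖ψ i k‖ ^ 2 = 1) ∧
    ϱ = ∑ i, l i • vecMulVec (ψ i) (star (ψ i)) ∧
    t = ∑ i, l i * vnEntropy (ptrace2 (vecMulVec (ψ i) (star (ψ i))))}

section Helpers
open Polynomial
set_option linter.unusedSectionVars false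

variable {n m : Type*} [Fintype n] [DecidableEq n] [Fintype m] [DecidableEq m]

lemma my_map_mul (A B : Matrix n n ℂ) : (A * B).map (C : ℂ →+* ℂ[X]) = A.map C * B.map C :=
  Matrix.map_mul

lemma my_charpoly_unitary_conj (U M : Matrix n n ℂ) (h1 : U * Uᴴ = 1) (h2 : Uᴴ * U = 1) :
    (U * M * Uᴴ).charpoly = M.charpoly := by
  have key : charmatrix (U * M * Uᴴ) = U.map C * charmatrix M * Uᴴ.map C := by
    rw [charmatrix, charmatrix, Matrix.mul_sub, Matrix.sub_mul]
    congr 1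
    · have h3 : U.map (C : ℂ →+* ℂ[X]) * scalar n X * Uᴴ.map C
          = scalar n X * (U.map C * Uᴴ.map C) := by
        rw [← (scalar_commute (X : ℂ[X]) (fun r' => Commute.all X r') (U.map C)).eq,
          Matrix.mul_assoc]
      rw [h3, ← my_map_mul, h1]
      simp
    · change C.mapMatrix (U * M * Uᴴ) = _
      simp only [RingHom.mapMatrix_apply]
      rw [my_map_mul, my_map_mul]
  rw [charpoly, key, det_mul, det_mul, mul_comm, ← mul_assoc, ← det_mul, ← my_map_mul, h2,
    charpoly]
  simp

lemma my_charpoly_diagonal (d : n → ℂ) :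
    (diagonal d).charpoly = (Finset.univ.val.map fun i => X - C (d i)).prod := by
  let e := Fintype.equivFin n
  have h0 : diagonal d = reindex e.symm e.symm (diagonal (d ∘ e.symm)) := by
    simp [reindex_apply]
  rw [h0, charpoly_reindex, charpoly_of_upperTriangular _ ?ht]
  case ht => exact fun i j hij => diagonal_apply_ne _ (by exact hij.ne')
  rw [← Finset.prod_eq_multiset_prod]
  simp only [diagonal_apply_eq, Function.comp_apply]
  exact Equiv.prod_comp e.symm fun j => X - C (d j)

lemma my_roots_charpoly_diagonal (d : n → ℂ) :
    (diagonal d).charpoly.roots = Finset.univ.val.map d := by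
  rw [my_charpoly_diagonal]
  have h : (Finset.univ.val.map fun i => X - C (d i))
      = (Finset.univ.val.map d).map fun a => X - C a := by rw [Multiset.map_map]; rfl
  rw [h, roots_multiset_prod_X_sub_C]

lemma my_eigenvalues_multiset {M : Matrix n n ℂ} (hM : M.IsHermitian)
    {U : Matrix n n ℂ} (h1 : U * Uᴴ = 1) (h2 : Uᴴ * U = 1) {d : n → ℝ}
    (hd : M = U * diagonal (fun i => (d i : ℂ)) * Uᴴ) :
    Finset.univ.val.map hM.eigenvalues = Finset.univ.val.map d := by
  have hc1 : M.charpoly = (diagonal (fun i => (d i : ℂ))).charpoly := by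
    rw [hd]; exact my_charpoly_unitary_conj _ _ h1 h2
  have hVmem := (hM.eigenvectorUnitary).2
  rw [Matrix.mem_unitaryGroup_iff] at hVmem
  have hc2 : M.charpoly = (diagonal (fun i => ((hM.eigenvalues i : ℝ) : ℂ))).charpoly := by
    conv_lhs => rw [hM.spectral_theorem]
    rw [Unitary.conjStarAlgAut_apply, Matrix.star_eq_conjTranspose]
    have h := my_charpoly_unitary_conj (hM.eigenvectorUnitary : Matrix n n ℂ)
      (diagonal (fun i => ((hM.eigenvalues i : ℝ) : ℂ))) hVmem ?h2
    case h2 =>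
      have h' := (hM.eigenvectorUnitary).2
      rw [Matrix.mem_unitaryGroup_iff'] at h'
      simpa [Matrix.star_eq_conjTranspose] using h'
    exact h
  have hroots := congrArg Polynomial.roots (hc1.symm.trans hc2)
  rw [my_roots_charpoly_diagonal, my_roots_charpoly_diagonal] at hroots
  have h := congrArg (Multiset.map Complex.re) hroots
  simpa [Multiset.map_map, Function.comp] using h.symm

lemma my_sum_f_eigenvalues {M : Matrix n n ℂ} (hM : M.IsHermitian)
    {U : Matrix n n ℂ} (h1 : U * Uᴴ = 1) (h2 : Uᴴ * U = 1) {d : n → ℝ}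
    (hd : M = U * diagonal (fun i => (d i : ℂ)) * Uᴴ) (f : ℝ → ℝ) :
    ∑ i, f (hM.eigenvalues i) = ∑ i, f (d i) := by
  rw [Finset.sum_eq_multiset_sum, Finset.sum_eq_multiset_sum,
    show (fun i => f (hM.eigenvalues i)) = f ∘ hM.eigenvalues from rfl,
    show (fun i => f (d i)) = f ∘ d from rfl, ← Multiset.map_map, ← Multiset.map_map]
  exact congrArg Multiset.sum
    (congrArg (Multiset.map f) (my_eigenvalues_multiset hM h1 h2 hd))

lemma my_trace_conj {U : Matrix n n ℂ} (h2 : Uᴴ * U = 1) (c : n → ℂ) :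
    (U * diagonal c * Uᴴ).trace = ∑ i, c i := by
  rw [Matrix.trace_mul_cycle, h2, Matrix.one_mul, trace_diagonal]

/-- Spectral theorem in the standard form used below. -/
lemma my_spectral {M : Matrix n n ℂ} (hM : M.IsHermitian) :
    M = (hM.eigenvectorUnitary : Matrix n n ℂ)
        * diagonal (fun i => ((hM.eigenvalues i : ℝ) : ℂ))
        * (hM.eigenvectorUnitary : Matrix n n ℂ)ᴴ := by
  conv_lhs => rw [hM.spectral_theorem]
  rw [Unitary.conjStarAlgAut_apply, Matrix.star_eq_conjTranspose]
  congr 2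

lemma my_unitary_1 {M : Matrix n n ℂ} (hM : M.IsHermitian) :
    (hM.eigenvectorUnitary : Matrix n n ℂ) * (hM.eigenvectorUnitary : Matrix n n ℂ)ᴴ = 1 := by
  have h := (hM.eigenvectorUnitary).2
  rw [Matrix.mem_unitaryGroup_iff] at h
  simpa [Matrix.star_eq_conjTranspose] using h

lemma my_unitary_2 {M : Matrix n n ℂ} (hM : M.IsHermitian) :
    (hM.eigenvectorUnitary : Matrix n n ℂ)ᴴ * (hM.eigenvectorUnitary : Matrix n n ℂ) = 1 := by
  have h := (hM.eigenvectorUnitary).2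
  rw [Matrix.mem_unitaryGroup_iff'] at h
  simpa [Matrix.star_eq_conjTranspose] using h

lemma my_sum_eigenvalues_eq_one {M : Matrix n n ℂ} (hM : M.IsHermitian) (htr : M.trace = 1) :
    ∑ i, hM.eigenvalues i = 1 := by
  have h : M.trace = ∑ i, ((hM.eigenvalues i : ℝ) : ℂ) := by
    conv_lhs => rw [my_spectral hM]
    exact my_trace_conj (my_unitary_2 hM) _
  rw [htr] at h
  have := h.symm
  push_cast at this
  exact_mod_cast this

lemma my_vnEntropy_eq {M : Matrix n n ℂ} (hM : M.IsHermitian) :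
    vnEntropy M = ∑ i, Real.negMulLog (hM.eigenvalues i) := by
  rw [vnEntropy, dif_pos hM]

lemma my_vnEntropy_nonneg {M : Matrix n n ℂ} (hM : M.PosSemidef) (htr : M.trace = 1) :
    0 ≤ vnEntropy M := by
  rw [my_vnEntropy_eq hM.1]
  have hsum := my_sum_eigenvalues_eq_one hM.1 htr
  refine Finset.sum_nonneg fun i _ => Real.negMulLog_nonneg (hM.eigenvalues_nonneg i) ?_
  calc hM.1.eigenvalues i ≤ ∑ j, hM.1.eigenvalues j :=
        Finset.single_le_sum (fun j _ => hM.eigenvalues_nonneg j) (Finset.mem_univ i)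
    _ = 1 := hsum

lemma my_kron_conjTranspose (A : Matrix n n ℂ) (B : Matrix m m ℂ) :
    (A ⊗ₖ B)ᴴ = Aᴴ ⊗ₖ Bᴴ := by
  ext ⟨i, j⟩ ⟨k, l⟩
  simp [conjTranspose_apply, kroneckerMap_apply]

lemma my_vnEntropy_kronecker {A : Matrix n n ℂ} {B : Matrix m m ℂ}
    (hA : A.PosSemidef) (hB : B.PosSemidef) (hTA : A.trace = 1) (hTB : B.trace = 1) :
    vnEntropy (A ⊗ₖ B) = vnEntropy A + vnEntropy B := by
  have hAh := hA.1
  have hBh := hB.1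
  set U := (hAh.eigenvectorUnitary : Matrix n n ℂ)
  set V := (hBh.eigenvectorUnitary : Matrix m m ℂ)
  set W := U ⊗ₖ V with hW
  set d : n × m → ℝ := fun p => hAh.eigenvalues p.1 * hBh.eigenvalues p.2 with hd
  have hW1 : W * Wᴴ = 1 := by
    rw [hW, my_kron_conjTranspose, ← Matrix.mul_kronecker_mul, my_unitary_1 hAh,
      my_unitary_1 hBh, Matrix.one_kronecker_one]
  have hW2 : Wᴴ * W = 1 := by
    rw [hW, my_kron_conjTranspose, ← Matrix.mul_kronecker_mul, my_unitary_2 hAh,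
      my_unitary_2 hBh, Matrix.one_kronecker_one]
  have hrep : A ⊗ₖ B = W * diagonal (fun p => (d p : ℂ)) * Wᴴ := by
    have hfun : (fun p : n × m => ((d p : ℝ) : ℂ))
        = fun p : n × m => ((hAh.eigenvalues p.1 : ℝ) : ℂ) * ((hBh.eigenvalues p.2 : ℝ) : ℂ) := by
      funext p
      simp only [hd]
      push_cast
      ring
    conv_lhs => rw [my_spectral hAh, my_spectral hBh]
    rw [hW, my_kron_conjTranspose, Matrix.mul_kronecker_mul, Matrix.mul_kronecker_mul,
      Matrix.diagonal_kronecker_diagonal, hfun]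
  have hABh : (A ⊗ₖ B).IsHermitian := by
    rw [Matrix.IsHermitian, my_kron_conjTranspose, hAh.eq, hBh.eq]
  have hμ : ∑ i, hAh.eigenvalues i = 1 := my_sum_eigenvalues_eq_one hAh hTA
  have hν : ∑ i, hBh.eigenvalues i = 1 := my_sum_eigenvalues_eq_one hBh hTB
  rw [my_vnEntropy_eq hABh, my_vnEntropy_eq hAh, my_vnEntropy_eq hBh,
    my_sum_f_eigenvalues hABh hW1 hW2 hrep Real.negMulLog]
  rw [Fintype.sum_prod_type]
  simp only [hd, Real.negMulLog_mul]
  rw [Finset.sum_congr rfl fun i _ => Finset.sum_add_distrib, Finset.sum_add_distrib]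
  congr 1
  · have h : ∀ x : n, ∑ y : m, hBh.eigenvalues y * Real.negMulLog (hAh.eigenvalues x)
        = Real.negMulLog (hAh.eigenvalues x) := by
      intro x; rw [← Finset.sum_mul, hν, one_mul]
    rw [Finset.sum_congr rfl fun x _ => h x]
  · rw [Finset.sum_comm]
    have h : ∀ y : m, ∑ x : n, hAh.eigenvalues x * Real.negMulLog (hBh.eigenvalues y)
        = Real.negMulLog (hBh.eigenvalues y) := by
      intro y; rw [← Finset.sum_mul, hμ, one_mul]
    rw [Finset.sum_congr rfl fun y _ => h y]

variable {n₁ n₂ : Type*} [Fintype n₁] [Fintype n₂] [DecidableEq n₁] [DecidableEq n₂]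

lemma my_ptrace2_vecMulVec (ψ : n₁ × n₂ → ℂ) :
    ptrace2 (vecMulVec ψ (star ψ))
      = (Matrix.of fun i k => ψ (i, k)) * (Matrix.of fun i k => ψ (i, k))ᴴ := by
  ext i j
  simp [ptrace2, Matrix.mul_apply, vecMulVec_apply]

lemma my_ptrace2_posSemidef (ψ : n₁ × n₂ → ℂ) :
    (ptrace2 (vecMulVec ψ (star ψ))).PosSemidef := by
  rw [my_ptrace2_vecMulVec]
  exact posSemidef_self_mul_conjTranspose _

lemma my_norm_sq_complex (z : ℂ) : z * star z = ((‖z‖ ^ 2 : ℝ) : ℂ) := by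
  rw [Complex.star_def, Complex.mul_conj, Complex.normSq_eq_norm_sq]

lemma my_ptrace2_trace (ψ : n₁ × n₂ → ℂ) (h : ∑ k, ‖ψ k‖ ^ 2 = 1) :
    (ptrace2 (vecMulVec ψ (star ψ))).trace = 1 := by
  have h1 : (ptrace2 (vecMulVec ψ (star ψ))).trace
      = ∑ i, ∑ k, ψ (i, k) * star (ψ (i, k)) := by
    simp [Matrix.trace, Matrix.diag, ptrace2, vecMulVec_apply]
  rw [h1]
  have h2 : ∀ i : n₁, ∀ k : n₂, ψ (i, k) * star (ψ (i, k)) = ((‖ψ (i, k)‖ ^ 2 : ℝ) : ℂ) :=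
    fun i k => my_norm_sq_complex _
  calc ∑ i, ∑ k, ψ (i, k) * star (ψ (i, k))
      = ∑ i : n₁, ∑ k : n₂, ((‖ψ (i, k)‖ ^ 2 : ℝ) : ℂ) := by
        exact Finset.sum_congr rfl fun i _ => Finset.sum_congr rfl fun k _ => h2 i k
    _ = ((∑ p : n₁ × n₂, ‖ψ p‖ ^ 2 : ℝ) : ℂ) := by rw [Fintype.sum_prod_type]; push_cast; rfl
    _ = 1 := by rw [h]; exact Complex.ofReal_one

lemma my_sum_prod_mul {R : Type*} [CommSemiring R] {α β γ δ : Type*}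
    [Fintype α] [Fintype β] [Fintype γ] [Fintype δ] (f : α × β → R) (g : γ × δ → R) :
    ∑ p : (α × γ) × (β × δ), f (p.1.1, p.2.1) * g (p.1.2, p.2.2)
      = (∑ q, f q) * (∑ q, g q) := by
  rw [← Equiv.sum_comp (Equiv.prodProdProdComm α β γ δ)
    (fun p : (α × γ) × (β × δ) => f (p.1.1, p.2.1) * g (p.1.2, p.2.2))]
  have h : ∀ q : (α × β) × (γ × δ),
      f (((Equiv.prodProdProdComm α β γ δ) q).1.1, ((Equiv.prodProdProdComm α β γ δ) q).2.1)
        * g (((Equiv.prodProdProdComm α β γ δ) q).1.2, ((Equiv.prodProdProdComm α β γ δ) q).2.2)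
      = f q.1 * g q.2 := fun ⟨⟨a, b⟩, ⟨c, d⟩⟩ => rfl
  rw [Finset.sum_congr rfl fun q _ => h q, Fintype.sum_prod_type, ← Finset.sum_mul_sum]

lemma my_ptrace2_prod (ψ φ : n₁ × n₂ → ℂ) :
    ptrace2 (vecMulVec (fun p : (n₁ × n₁) × (n₂ × n₂) => ψ (p.1.1, p.2.1) * φ (p.1.2, p.2.2))
      (star fun p : (n₁ × n₁) × (n₂ × n₂) => ψ (p.1.1, p.2.1) * φ (p.1.2, p.2.2)))
    = ptrace2 (vecMulVec ψ (star ψ)) ⊗ₖ ptrace2 (vecMulVec φ (star φ)) := by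
  ext ⟨a, c⟩ ⟨a', c'⟩
  simp only [ptrace2, vecMulVec_apply, kroneckerMap_apply, Matrix.of_apply, Pi.star_apply,
    star_mul']
  rw [Fintype.sum_prod_type, Finset.sum_mul_sum]
  refine Finset.sum_congr rfl fun b _ => Finset.sum_congr rfl fun d _ => ?_
  ring

lemma my_decomp {ϱ : Matrix (n₁ × n₂) (n₁ × n₂) ℂ} (hpsd : ϱ.PosSemidef) (htr : ϱ.trace = 1) :
    ∃ (m : ℕ) (l : Fin m → ℝ) (ψ : Fin m → (n₁ × n₂ → ℂ)),
      (∀ i, 0 ≤ l i) ∧ (∑ i, l i = 1) ∧ (∀ i, ∑ k, ‖ψ i k‖ ^ 2 = 1) ∧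
      ϱ = ∑ i, l i • vecMulVec (ψ i) (star (ψ i)) := by
  let e := (Fintype.equivFin (n₁ × n₂)).symm
  set U := (hpsd.1.eigenvectorUnitary : Matrix (n₁ × n₂) (n₁ × n₂) ℂ) with hU
  refine ⟨Fintype.card (n₁ × n₂), fun i => hpsd.1.eigenvalues (e i),
    fun i k => U k (e i), fun i => hpsd.eigenvalues_nonneg _, ?_, ?_, ?_⟩
  · exact (Equiv.sum_comp e hpsd.1.eigenvalues).trans (my_sum_eigenvalues_eq_one hpsd.1 htr)
  · intro i
    have h := my_unitary_2 hpsd.1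
    have h2 : (Uᴴ * U) (e i) (e i) = 1 := by rw [h]; simp
    rw [Matrix.mul_apply] at h2
    have h3 : ∀ k, Uᴴ (e i) k * U k (e i) = ((‖U k (e i)‖ ^ 2 : ℝ) : ℂ) := by
      intro k
      rw [Matrix.conjTranspose_apply, mul_comm]
      exact my_norm_sq_complex _
    rw [Finset.sum_congr rfl fun k _ => h3 k] at h2
    exact_mod_cast h2
  · conv_lhs => rw [my_spectral hpsd.1, ← hU]
    rw [Equiv.sum_comp e
      (fun j => hpsd.1.eigenvalues j • vecMulVec (fun k => U k j) (star fun k => U k j))]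
    ext p q
    rw [Matrix.mul_apply]
    simp only [Matrix.mul_diagonal, Matrix.conjTranspose_apply, Matrix.sum_apply,
      Matrix.smul_apply, vecMulVec_apply, Pi.star_apply, Complex.real_smul]
    refine Finset.sum_congr rfl fun j _ => ?_
    ring

lemma my_mem_big {ϱ : Matrix (n₁ × n₂) (n₁ × n₂) ℂ}
    (m : ℕ) (l : Fin m → ℝ) (ψ : Fin m → (n₁ × n₂ → ℂ))
    (hl0 : ∀ i, 0 ≤ l i) (hl1 : ∑ i, l i = 1) (hnorm : ∀ i, ∑ k, ‖ψ i k‖ ^ 2 = 1)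
    (hdec : ϱ = ∑ i, l i • vecMulVec (ψ i) (star (ψ i))) :
    ∃ (M : ℕ) (L : Fin M → ℝ) (Ψ : Fin M → ((n₁ × n₁) × (n₂ × n₂) → ℂ)),
      (∀ i, 0 ≤ L i) ∧ (∑ i, L i = 1) ∧ (∀ i, ∑ k, ‖Ψ i k‖ ^ 2 = 1) ∧
      (Matrix.reindex (Equiv.prodProdProdComm n₁ n₂ n₁ n₂)
          (Equiv.prodProdProdComm n₁ n₂ n₁ n₂) (ϱ ⊗ₖ ϱ))
        = ∑ i, L i • vecMulVec (Ψ i) (star (Ψ i)) ∧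
      (∑ i, L i * vnEntropy (ptrace2 (vecMulVec (Ψ i) (star (Ψ i)))))
        = 2 * ∑ i, l i * vnEntropy (ptrace2 (vecMulVec (ψ i) (star (ψ i)))) := by
  set E : Fin m × Fin m ≃ Fin (m * m) := finProdFinEquiv with hE
  set L : Fin (m * m) → ℝ := fun k => l (E.symm k).1 * l (E.symm k).2 with hL
  set Ψ : Fin (m * m) → ((n₁ × n₁) × (n₂ × n₂) → ℂ) :=
    fun k p => ψ (E.symm k).1 (p.1.1, p.2.1) * ψ (E.symm k).2 (p.1.2, p.2.2) with hΨ
  refine ⟨m * m, L, Ψ, fun i => mul_nonneg (hl0 _) (hl0 _), ?_, ?_, ?_, ?_⟩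
  · rw [← Equiv.sum_comp E L]
    simp only [hL, Equiv.symm_apply_apply]
    rw [Fintype.sum_prod_type, ← Finset.sum_mul_sum, hl1, mul_one]
  · intro k
    have h1 : ∀ p : (n₁ × n₁) × (n₂ × n₂), ‖Ψ k p‖ ^ 2
        = ‖ψ (E.symm k).1 (p.1.1, p.2.1)‖ ^ 2 * ‖ψ (E.symm k).2 (p.1.2, p.2.2)‖ ^ 2 := by
      intro p; rw [hΨ]; simp [norm_mul, mul_pow]
    rw [Finset.sum_congr rfl fun p _ => h1 p,
      my_sum_prod_mul (fun q => ‖ψ (E.symm k).1 q‖ ^ 2) (fun q => ‖ψ (E.symm k).2 q‖ ^ 2),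
      hnorm _, hnorm _, mul_one]
  · ext ⟨⟨a, c⟩, ⟨b, d⟩⟩ ⟨⟨a', c'⟩, ⟨b', d'⟩⟩
    have lhs_eq : (Matrix.reindex (Equiv.prodProdProdComm n₁ n₂ n₁ n₂)
        (Equiv.prodProdProdComm n₁ n₂ n₁ n₂) (ϱ ⊗ₖ ϱ)) ((a, c), (b, d)) ((a', c'), (b', d'))
        = ϱ (a, b) (a', b') * ϱ (c, d) (c', d') := rfl
    rw [lhs_eq, hdec, Matrix.sum_apply, Matrix.sum_apply, Matrix.sum_apply, Finset.sum_mul_sum,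
      ← Equiv.sum_comp E (fun k => (L k • vecMulVec (Ψ k) (star (Ψ k)))
        ((a, c), (b, d)) ((a', c'), (b', d'))), Fintype.sum_prod_type]
    refine Finset.sum_congr rfl fun i _ => Finset.sum_congr rfl fun j _ => ?_
    simp only [hL, hΨ, Equiv.symm_apply_apply, Matrix.smul_apply, vecMulVec_apply,
      Pi.star_apply, star_mul', smul_eq_mul, Complex.real_smul, Complex.ofReal_mul]
    ring
  · rw [← Equiv.sum_comp E (fun k => L k * vnEntropy (ptrace2 (vecMulVec (Ψ k) (star (Ψ k)))))]
    have hterm : ∀ p : Fin m × Fin m,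
        L (E p) * vnEntropy (ptrace2 (vecMulVec (Ψ (E p)) (star (Ψ (E p)))))
        = l p.1 * l p.2 * (vnEntropy (ptrace2 (vecMulVec (ψ p.1) (star (ψ p.1))))
            + vnEntropy (ptrace2 (vecMulVec (ψ p.2) (star (ψ p.2))))) := by
      intro p
      simp only [hL, hΨ, Equiv.symm_apply_apply]
      rw [my_ptrace2_prod, my_vnEntropy_kronecker (my_ptrace2_posSemidef _)
        (my_ptrace2_posSemidef _) (my_ptrace2_trace _ (hnorm _)) (my_ptrace2_trace _ (hnorm _))]
    rw [Finset.sum_congr rfl fun p _ => hterm p, Fintype.sum_prod_type]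
    set S : Fin m → ℝ := fun i => vnEntropy (ptrace2 (vecMulVec (ψ i) (star (ψ i)))) with hSdef
    have hrow : ∀ i : Fin m, ∑ j, l i * l j * (S i + S j)
        = l i * S i + l i * (∑ j, l j * S j) := by
      intro i
      have h1 : ∀ j, l i * l j * (S i + S j) = (l i * S i) * l j + l i * (l j * S j) :=
        fun j => by ring
      rw [Finset.sum_congr rfl fun j _ => h1 j, Finset.sum_add_distrib, ← Finset.mul_sum,
        ← Finset.mul_sum, hl1, mul_one]
    rw [Finset.sum_congr rfl fun i _ => hrow i, Finset.sum_add_distrib, ← Finset.sum_mul,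
      hl1, one_mul, two_mul]

end Helpers

/-- Subadditivity of entanglement of formation with respect to tensoring:
`E(ϱ ⊗ ϱ) ≤ 2 E(ϱ)`, where `ϱ ⊗ ϱ` is regarded as a state on
`(H₁ ⊗ H₁) ⊗ (H₂ ⊗ H₂)`, separating the two `H₁` factors from the two `H₂` factors. -/
theorem stmt15 {n₁ n₂ : Type*} [Fintype n₁] [Fintype n₂] [DecidableEq n₁] [DecidableEq n₂]
    (ϱ : Matrix (n₁ × n₂) (n₁ × n₂) ℂ) (hpsd : ϱ.PosSemidef) (htr : ϱ.trace = 1) :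
    EoF (Matrix.reindex (Equiv.prodProdProdComm n₁ n₂ n₁ n₂)
          (Equiv.prodProdProdComm n₁ n₂ n₁ n₂) (ϱ ⊗ₖ ϱ))
      ≤ 2 * EoF ϱ := by
  obtain ⟨m₀, l₀, ψ₀, h₀a, h₀b, h₀c, h₀d⟩ := my_decomp hpsd htr
  set Sϱ : Set ℝ := {t : ℝ | ∃ (m : ℕ) (l : Fin m → ℝ) (ψ : Fin m → (n₁ × n₂ → ℂ)),
    (∀ i, 0 ≤ l i) ∧ (∑ i, l i = 1) ∧ (∀ i, ∑ k, ‖ψ i k‖ ^ 2 = 1) ∧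
    ϱ = ∑ i, l i • vecMulVec (ψ i) (star (ψ i)) ∧
    t = ∑ i, l i * vnEntropy (ptrace2 (vecMulVec (ψ i) (star (ψ i))))} with hSϱ
  have hne : Sϱ.Nonempty := ⟨_, m₀, l₀, ψ₀, h₀a, h₀b, h₀c, h₀d, rfl⟩
  have hEoF : EoF ϱ = sInf Sϱ := rfl
  have key : ∀ t ∈ Sϱ, EoF (Matrix.reindex (Equiv.prodProdProdComm n₁ n₂ n₁ n₂)
      (Equiv.prodProdProdComm n₁ n₂ n₁ n₂) (ϱ ⊗ₖ ϱ)) ≤ 2 * t := by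
    rintro t ⟨m, l, ψ, ha, hb, hc, hd, rfl⟩
    obtain ⟨M, L, Ψ, hA, hB, hC, hD, hE⟩ := my_mem_big m l ψ ha hb hc hd
    refine csInf_le ⟨0, ?_⟩ ⟨M, L, Ψ, hA, hB, hC, hD, hE.symm⟩
    rintro u ⟨M', L', Ψ', hA', _, hC', _, rfl⟩
    exact Finset.sum_nonneg fun i _ => mul_nonneg (hA' i)
      (my_vnEntropy_nonneg (my_ptrace2_posSemidef _) (my_ptrace2_trace _ (hC' i)))
  have hsmul : (2 : ℝ) * sInf Sϱ = sInf ((2 : ℝ) • Sϱ) := by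
    rw [Real.sInf_smul_of_nonneg (by norm_num : (0:ℝ) ≤ 2), smul_eq_mul]
  rw [hEoF, hsmul]
  refine le_csInf (hne.smul_set) ?_
  rintro b ⟨t, ht, rfl⟩
  simpa [smul_eq_mul] using key t ht
end
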